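/- arXiv:2504.10380 — 6 statements merged into one kernel-verified Lean document; each statement's English description precedes it below -/
import Mathlib

section
/- Existence of forward completion. Every Lorentzian pre-length space (X, ℓ) admits a forward completion (X̄, ℓ̄). -/
open Filter Topology Set

set_option linter.unusedVariables false

universe u v w

noncomputable section

/-- The time separation function `τ = max(0, ℓ)`. -/
def lorTau {X : Type u} (ℓ : X → X → EReal) (x y : X) : EReal := max 0 (ℓ x y)

/-- The chronological relation `x ≪ y`. -/
def chron {X : Type u} (ℓ : X → X → EReal) (x y : X) : Prop := 0 < ℓ x y

/-- The causal relation `x ≤ y`. -/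
def causal {X : Type u} (ℓ : X → X → EReal) (x y : X) : Prop := 0 ≤ ℓ x y

/-- The causal diamond `J(p,q)`. -/
def diamondJ {X : Type u} (ℓ : X → X → EReal) (p q : X) : Set X :=
  {z | causal ℓ p z ∧ causal ℓ z q}

/-- The chronological diamond `I(p,q)`. -/
def diamondI {X : Type u} (ℓ : X → X → EReal) (p q : X) : Set X :=
  {z | chron ℓ p z ∧ chron ℓ z q}

/-- A Lorentzian pre-length space structure on a topological space `(X, tX)`:
`ℓ` takes values in `{−∞} ∪ [0,∞]`, satisfies the reverse triangle inequality (with the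
convention `−∞ + ∞ = ∞ + (−∞) = −∞`, which is definitional for `EReal`), `ℓ(x,x) ≥ 0`,
and the topology is finer than the chronological one. -/
structure IsLPLS {X : Type u} (tX : TopologicalSpace X) (ℓ : X → X → EReal) : Prop where
  bot_or_nonneg : ∀ x y, ℓ x y = ⊥ ∨ 0 ≤ ℓ x y
  revTriangle : ∀ x y z, ℓ x y + ℓ y z ≤ ℓ x z
  refl_nonneg : ∀ x, 0 ≤ ℓ x x
  open_Iplus : ∀ x, @IsOpen X tX {y | chron ℓ x y}
  open_Iminus : ∀ x, @IsOpen X tX {y | chron ℓ y x}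

/-- Forward completeness: every monotone increasing and bounded sequence converges. -/
def ForwardComplete {X : Type u} (tX : TopologicalSpace X) (ℓ : X → X → EReal) : Prop :=
  ∀ (x : ℕ → X) (xhat : X), (∀ k, causal ℓ (x k) (x (k + 1))) → (∀ k, causal ℓ (x k) xhat) →
    ∃ y, Tendsto x atTop (@nhds X tX y)

/-- `(Y, tY, ρ)` together with the map `ι : X → Y` is a forward completion of
`(X, tX, ℓ)`: it is a forward complete Lorentzian pre-length space, all causal futures
and pasts are closed, `ι` is `ℓ`-preserving and `X` is forward dense in `Y`. -/
structure IsForwardCompletion {X : Type u} (tX : TopologicalSpace X) (ℓ : X → X → EReal)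
    {Y : Type v} (tY : TopologicalSpace Y) (ρ : Y → Y → EReal) (ι : X → Y) : Prop where
  lpls : IsLPLS tY ρ
  fwdComplete : ForwardComplete tY ρ
  closed_Jplus : ∀ y : Y, @IsClosed Y tY {z | causal ρ y z}
  closed_Jminus : ∀ y : Y, @IsClosed Y tY {z | causal ρ z y}
  isometric : ∀ x x' : X, ρ (ι x) (ι x') = ℓ x x'
  fwdDense : ∀ y : Y, ∃ u : ℕ → X,
    (∀ k, causal ρ (ι (u k)) (ι (u (k + 1)))) ∧ (∀ k, causal ρ (ι (u k)) y) ∧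
    Tendsto (fun k => ι (u k)) atTop (@nhds Y tY y)

/-!
Take as points of the completion all future-directed causal sequences of `X`, embed `X` by
constant sequences, and say that `u` lies causally below `v` when every `u k` lies below some
`v m`. The time separation of `u` and `v` is `⊥` unless `u` lies below `v`; otherwise it is the
larger of `0` and `⨆ z, (⨅ k, ℓ (u k) z) + (⨆ m, ℓ z (v m))`, so that chronology must be witnessed
by a single point `z` causally above all of `u`; this is what makes `a ≪ v` imply `a ≪ v m` for
some `m`. Give the completion the coarsest topology in which every `I±` is open and
every `J±` closed. In it, `U` converges to every `w` that lies above all `U n` and whose terms `w m`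
eventually lie below `U n`. A causal sequence is therefore the limit of its own terms, and a
causal sequence of sequences converges to a diagonal sequence.
-/

section CausalRelation

variable {Y : Type*} {ρ : Y → Y → EReal}

theorem causal_trans (htri : ∀ x y z, ρ x y + ρ y z ≤ ρ x z) {x y z : Y}
    (hxy : causal ρ x y) (hyz : causal ρ y z) : causal ρ x z :=
  (add_nonneg hxy hyz).trans (htri x y z)

theorem chron_of_chron_of_causal (htri : ∀ x y z, ρ x y + ρ y z ≤ ρ x z) {x y z : Y}
    (hxy : chron ρ x y) (hyz : causal ρ y z) : chron ρ x z :=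
  (EReal.add_pos_of_pos_of_nonneg hxy hyz).trans_le (htri x y z)

theorem chron_of_causal_of_chron (htri : ∀ x y z, ρ x y + ρ y z ≤ ρ x z) {x y z : Y}
    (hxy : causal ρ x y) (hyz : chron ρ y z) : chron ρ x z :=
  (Right.add_pos_of_nonneg_of_pos hxy hyz).trans_le (htri x y z)

theorem causal_of_le_of_chain (htri : ∀ x y z, ρ x y + ρ y z ≤ ρ x z)
    (hrefl : ∀ x, 0 ≤ ρ x x) {u : ℕ → Y} (hu : ∀ k, causal ρ (u k) (u (k + 1))) {m n : ℕ}
    (hmn : m ≤ n) : causal ρ (u m) (u n) := by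
  induction n, hmn using Nat.le_induction with
  | base => exact hrefl (u m)
  | succ n _ ih => exact causal_trans htri ih (hu n)

abbrev chronCausalTopology (ρ : Y → Y → EReal) : TopologicalSpace Y :=
  .generateFrom
    (⋃ a, {{y | chron ρ a y}, {y | chron ρ y a}, {y | causal ρ a y}ᶜ, {y | causal ρ y a}ᶜ})

theorem tendsto_chronCausalTopology {U : ℕ → Y} {w : Y}
    (hIplus : ∀ a, chron ρ a w → ∀ᶠ n in atTop, chron ρ a (U n))
    (hIminus : ∀ a, chron ρ w a → ∀ᶠ n in atTop, chron ρ (U n) a)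
    (hJplus : ∀ a, ¬causal ρ a w → ∀ᶠ n in atTop, ¬causal ρ a (U n))
    (hJminus : ∀ a, ¬causal ρ w a → ∀ᶠ n in atTop, ¬causal ρ (U n) a) :
    Tendsto U atTop (@nhds Y (chronCausalTopology ρ) w) := by
  refine TopologicalSpace.tendsto_nhds_generateFrom_iff.2 ?_
  simp only [mem_iUnion, mem_insert_iff, mem_singleton_iff]
  rintro s ⟨a, rfl | rfl | rfl | rfl⟩ hw
  exacts [hIplus a hw, hIminus a hw, hJplus a hw, hJminus a hw]

theorem isOpen_chronCausalTopology_Iplus (a : Y) :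
    @IsOpen Y (chronCausalTopology ρ) {y | chron ρ a y} :=
  .basic _ (mem_iUnion.2 ⟨a, by simp⟩)

theorem isOpen_chronCausalTopology_Iminus (a : Y) :
    @IsOpen Y (chronCausalTopology ρ) {y | chron ρ y a} :=
  .basic _ (mem_iUnion.2 ⟨a, by simp⟩)

theorem isClosed_chronCausalTopology_Jplus (a : Y) :
    @IsClosed Y (chronCausalTopology ρ) {y | causal ρ a y} :=
  @isOpen_compl_iff _ _ (chronCausalTopology ρ) |>.1 (.basic _ (mem_iUnion.2 ⟨a, by simp⟩))

theorem isClosed_chronCausalTopology_Jminus (a : Y) :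
    @IsClosed Y (chronCausalTopology ρ) {y | causal ρ y a} :=
  @isOpen_compl_iff _ _ (chronCausalTopology ρ) |>.1 (.basic _ (mem_iUnion.2 ⟨a, by simp⟩))

theorem isLPLS_chronCausalTopology (hbot : ∀ x y, ρ x y = ⊥ ∨ 0 ≤ ρ x y)
    (htri : ∀ x y z, ρ x y + ρ y z ≤ ρ x z) (hrefl : ∀ x, 0 ≤ ρ x x) :
    IsLPLS (chronCausalTopology ρ) ρ :=
  ⟨hbot, htri, hrefl, isOpen_chronCausalTopology_Iplus, isOpen_chronCausalTopology_Iminus⟩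

end CausalRelation

namespace EReal

theorem add_iSup_le_iSup_add {ι : Sort*} (c : EReal) (f : ι → EReal) :
    c + ⨆ i, f i ≤ ⨆ i, c + f i := by
  refine add_le_of_forall_lt fun a ha b hb => ?_
  obtain ⟨i, hi⟩ := lt_iSup_iff.1 hb
  exact (add_le_add ha.le hi.le).trans (le_iSup (fun i => c + f i) i)

theorem iSup_add_le_iSup_add {ι : Sort*} (f : ι → EReal) (c : EReal) :
    (⨆ i, f i) + c ≤ ⨆ i, f i + c := by
  simpa only [add_comm _ c] using add_iSup_le_iSup_add c f

end EReal

theorem max_zero_add_max_zero_le {α : Type*} [AddZeroClass α] [LinearOrder α] {a b c : α}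
    (hac : a ≤ c) (hbc : b ≤ c) (habc : a + b ≤ c) : max 0 a + max 0 b ≤ max 0 c := by
  rcases le_total a 0 with ha | ha <;> rcases le_total b 0 with hb | hb <;>
    simp only [max_eq_left, max_eq_right, ha, hb, zero_add, add_zero] <;>
    simp [hac, hbc, habc]

namespace SeqSep

variable {X : Type*} (ℓ : X → X → EReal)

def SeqLE (u v : ℕ → X) : Prop := ∀ k, ∃ m, causal ℓ (u k) (v m)

def infSep (u : ℕ → X) (z : X) : EReal := ⨅ k, ℓ (u k) z

def supSep (z : X) (v : ℕ → X) : EReal := ⨆ m, ℓ z (v m)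

def midSep (u v : ℕ → X) : EReal := ⨆ z, infSep ℓ u z + supSep ℓ z v

open Classical in
def seqSep (u v : ℕ → X) : EReal := if SeqLE ℓ u v then max 0 (midSep ℓ u v) else ⊥

variable {ℓ}

theorem infSep_le (u : ℕ → X) (z : X) (k : ℕ) : infSep ℓ u z ≤ ℓ (u k) z :=
  iInf_le _ k

theorem le_supSep (z : X) (v : ℕ → X) (m : ℕ) : ℓ z (v m) ≤ supSep ℓ z v :=
  le_iSup (fun m => ℓ z (v m)) m

theorem le_midSep (u v : ℕ → X) (z : X) : infSep ℓ u z + supSep ℓ z v ≤ midSep ℓ u v :=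
  le_iSup (fun z => infSep ℓ u z + supSep ℓ z v) z

@[simp]
theorem infSep_const (x z : X) : infSep ℓ (fun _ => x) z = ℓ x z := iInf_const

@[simp]
theorem supSep_const (z x : X) : supSep ℓ z (fun _ => x) = ℓ z x := iSup_const

theorem seqSep_nonneg_iff {u v : ℕ → X} : 0 ≤ seqSep ℓ u v ↔ SeqLE ℓ u v := by
  unfold seqSep
  split_ifs with h
  · exact iff_of_true (le_max_left _ _) h
  · exact iff_of_false EReal.bot_lt_zero.not_ge h

theorem seqSep_pos_iff {u v : ℕ → X} : 0 < seqSep ℓ u v ↔ SeqLE ℓ u v ∧ 0 < midSep ℓ u v := by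
  unfold seqSep
  split_ifs with h <;> simp [h]

theorem seqSep_eq_bot_or_nonneg (u v : ℕ → X) : seqSep ℓ u v = ⊥ ∨ 0 ≤ seqSep ℓ u v := by
  unfold seqSep
  split_ifs
  exacts [.inr (le_max_left _ _), .inl rfl]

theorem seqLE_const_left_iff {x : X} {v : ℕ → X} :
    SeqLE ℓ (fun _ => x) v ↔ ∃ m, causal ℓ x (v m) :=
  forall_const ℕ

theorem SeqLE.refl (hrefl : ∀ x, 0 ≤ ℓ x x) (u : ℕ → X) : SeqLE ℓ u u :=
  fun k => ⟨k, hrefl (u k)⟩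

theorem SeqLE.trans (htri : ∀ x y z, ℓ x y + ℓ y z ≤ ℓ x z) {u v w : ℕ → X}
    (huv : SeqLE ℓ u v) (hvw : SeqLE ℓ v w) : SeqLE ℓ u w := fun k =>
  let ⟨m, hm⟩ := huv k
  let ⟨n, hn⟩ := hvw m
  ⟨n, causal_trans htri hm hn⟩

theorem infSep_anti (htri : ∀ x y z, ℓ x y + ℓ y z ≤ ℓ x z) {u v : ℕ → X}
    (huv : SeqLE ℓ u v) (z : X) : infSep ℓ v z ≤ infSep ℓ u z := by
  refine le_iInf fun k => ?_
  obtain ⟨m, hm⟩ := huv k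
  calc infSep ℓ v z ≤ 0 + ℓ (v m) z := by rw [zero_add]; exact infSep_le v z m
    _ ≤ ℓ (u k) (v m) + ℓ (v m) z := add_le_add_left hm _
    _ ≤ ℓ (u k) z := htri _ _ _

theorem supSep_mono (htri : ∀ x y z, ℓ x y + ℓ y z ≤ ℓ x z) {v w : ℕ → X}
    (hvw : SeqLE ℓ v w) (z : X) : supSep ℓ z v ≤ supSep ℓ z w := by
  refine iSup_le fun m => ?_
  obtain ⟨n, hn⟩ := hvw m
  calc ℓ z (v m) = ℓ z (v m) + 0 := (add_zero _).symm
    _ ≤ ℓ z (v m) + ℓ (v m) (w n) := add_le_add_right hn _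
    _ ≤ ℓ z (w n) := htri _ _ _
    _ ≤ supSep ℓ z w := le_supSep z w n

theorem supSep_add_infSep_le (htri : ∀ x y z, ℓ x y + ℓ y z ≤ ℓ x z) (z : X) (v : ℕ → X)
    (z' : X) : supSep ℓ z v + infSep ℓ v z' ≤ ℓ z z' :=
  (EReal.iSup_add_le_iSup_add _ _).trans <| iSup_le fun m =>
    (add_le_add_right (infSep_le v z' m) _).trans (htri _ _ _)

theorem add_supSep_le (htri : ∀ x y z, ℓ x y + ℓ y z ≤ ℓ x z) (z z' : X) (w : ℕ → X) :
    ℓ z z' + supSep ℓ z' w ≤ supSep ℓ z w :=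
  (EReal.add_iSup_le_iSup_add _ _).trans <| iSup_le fun n =>
    (htri z z' (w n)).trans (le_supSep z w n)

theorem midSep_add_le (htri : ∀ x y z, ℓ x y + ℓ y z ≤ ℓ x z) (u v w : ℕ → X) :
    midSep ℓ u v + midSep ℓ v w ≤ midSep ℓ u w := by
  refine (EReal.iSup_add_le_iSup_add _ _).trans <| iSup_le fun z =>
    (EReal.add_iSup_le_iSup_add _ _).trans <| iSup_le fun z' => ?_
  calc infSep ℓ u z + supSep ℓ z v + (infSep ℓ v z' + supSep ℓ z' w)
      = infSep ℓ u z + ((supSep ℓ z v + infSep ℓ v z') + supSep ℓ z' w) := by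
        simp only [add_assoc]
    _ ≤ infSep ℓ u z + (ℓ z z' + supSep ℓ z' w) := by
        gcongr; exact supSep_add_infSep_le htri z v z'
    _ ≤ infSep ℓ u z + supSep ℓ z w := by gcongr; exact add_supSep_le htri z z' w
    _ ≤ midSep ℓ u w := le_midSep u w z

theorem seqSep_add_le (htri : ∀ x y z, ℓ x y + ℓ y z ≤ ℓ x z) (u v w : ℕ → X) :
    seqSep ℓ u v + seqSep ℓ v w ≤ seqSep ℓ u w := by
  by_cases huv : SeqLE ℓ u v
  · by_cases hvw : SeqLE ℓ v w
    · rw [seqSep, seqSep, seqSep, if_pos huv, if_pos hvw, if_pos (SeqLE.trans htri huv hvw)]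
      refine max_zero_add_max_zero_le ?_ ?_ (midSep_add_le htri u v w)
      · exact iSup_mono fun z => add_le_add_right (supSep_mono htri hvw z) _
      · exact iSup_mono fun z => add_le_add_left (infSep_anti htri huv z) _
    · rw [show seqSep ℓ v w = ⊥ from if_neg hvw, EReal.add_bot]; exact bot_le
  · rw [show seqSep ℓ u v = ⊥ from if_neg huv, EReal.bot_add]; exact bot_le

theorem seqSep_const (hbot : ∀ x y, ℓ x y = ⊥ ∨ 0 ≤ ℓ x y)
    (htri : ∀ x y z, ℓ x y + ℓ y z ≤ ℓ x z) (hrefl : ∀ x, 0 ≤ ℓ x x) (x y : X) :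
    seqSep ℓ (fun _ => x) (fun _ => y) = ℓ x y := by
  by_cases hxy : causal ℓ x y
  · have hmid : midSep ℓ (fun _ => x) (fun _ => y) = ℓ x y := by
      refine le_antisymm (iSup_le fun z => ?_) ?_
      · simpa using htri x z y
      · calc ℓ x y ≤ ℓ x x + ℓ x y := le_add_of_nonneg_left (hrefl x)
          _ ≤ _ := by simpa using le_midSep (ℓ := ℓ) (fun _ => x) (fun _ => y) x
    rw [seqSep, if_pos (seqLE_const_left_iff.2 ⟨0, hxy⟩), hmid, max_eq_right hxy]
  · rw [seqSep, if_neg fun h => hxy (h 0).choose_spec,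
      (hbot x y).resolve_right hxy]

theorem exists_chron_const_of_chron (htri : ∀ x y z, ℓ x y + ℓ y z ≤ ℓ x z) {u v : ℕ → X}
    (h : 0 < seqSep ℓ u v) : ∃ m, 0 < seqSep ℓ u (fun _ => v m) := by
  obtain ⟨z, hz⟩ := lt_iSup_iff.1 (seqSep_pos_iff.1 h).2
  obtain ⟨m, hm⟩ := lt_iSup_iff.1 (hz.trans_le (EReal.add_iSup_le_iSup_add _ _))
  refine ⟨m, seqSep_pos_iff.2 ⟨fun k => ⟨0, ?_⟩, hm.trans_le ?_⟩⟩
  · exact (hm.trans_le ((add_le_add (infSep_le u z k) le_rfl).trans (htri _ _ _))).le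
  · simpa using le_midSep (ℓ := ℓ) u (fun _ => v m) z

end SeqSep

def CausalSeq {X : Type u} (ℓ : X → X → EReal) : Type u :=
  {u : ℕ → X // ∀ k, causal ℓ (u k) (u (k + 1))}

namespace CausalSeq

open SeqSep

variable {X : Type u} {ℓ : X → X → EReal}

variable (ℓ) in
def sep (u v : CausalSeq ℓ) : EReal := seqSep ℓ u.1 v.1

def const (hrefl : ∀ x, 0 ≤ ℓ x x) (x : X) : CausalSeq ℓ := ⟨fun _ => x, fun _ => hrefl x⟩

theorem causal_sep_iff {u v : CausalSeq ℓ} : causal (sep ℓ) u v ↔ SeqLE ℓ u.1 v.1 :=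
  seqSep_nonneg_iff

theorem sep_const (hbot : ∀ x y, ℓ x y = ⊥ ∨ 0 ≤ ℓ x y)
    (htri : ∀ x y z, ℓ x y + ℓ y z ≤ ℓ x z) (hrefl : ∀ x, 0 ≤ ℓ x x) (x y : X) :
    sep ℓ (const hrefl x) (const hrefl y) = ℓ x y :=
  seqSep_const hbot htri hrefl x y

theorem sep_add_le (htri : ∀ x y z, ℓ x y + ℓ y z ≤ ℓ x z) (u v w : CausalSeq ℓ) :
    sep ℓ u v + sep ℓ v w ≤ sep ℓ u w :=
  seqSep_add_le htri u.1 v.1 w.1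

theorem sep_self_nonneg (hrefl : ∀ x, 0 ≤ ℓ x x) (u : CausalSeq ℓ) : 0 ≤ sep ℓ u u :=
  seqSep_nonneg_iff.2 (SeqLE.refl hrefl u.1)

theorem causal_const_apply (hrefl : ∀ x, 0 ≤ ℓ x x) (u : CausalSeq ℓ) (k : ℕ) :
    causal (sep ℓ) (const hrefl (u.1 k)) u :=
  causal_sep_iff.2 (seqLE_const_left_iff.2 ⟨k, hrefl _⟩)

theorem tendsto_of_causal_of_eventually (htri : ∀ x y z, ℓ x y + ℓ y z ≤ ℓ x z)
    (hrefl : ∀ x, 0 ≤ ℓ x x) {U : ℕ → CausalSeq ℓ} {w : CausalSeq ℓ}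
    (hle : ∀ n, causal (sep ℓ) (U n) w)
    (hev : ∀ m, ∀ᶠ n in atTop, causal (sep ℓ) (const hrefl (w.1 m)) (U n)) :
    Tendsto U atTop (@nhds _ (chronCausalTopology (sep ℓ)) w) := by
  refine tendsto_chronCausalTopology (fun a ha => ?_) (fun a ha => ?_) (fun a ha => ?_)
    (fun a ha => ?_)
  · obtain ⟨m, hm⟩ := exists_chron_const_of_chron htri ha
    filter_upwards [hev m] with n hn
    exact chron_of_chron_of_causal (sep_add_le htri) (y := const hrefl (w.1 m)) hm hn
  · exact .of_forall fun n => chron_of_causal_of_chron (sep_add_le htri) (hle n) ha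
  · exact .of_forall fun n h => ha (causal_trans (sep_add_le htri) h (hle n))
  · refine not_frequently.1 fun hfreq => ha (causal_sep_iff.2 fun m => ?_)
    obtain ⟨n, hmn, hna⟩ := ((hev m).and_frequently hfreq).exists
    exact seqLE_const_left_iff.1 (causal_sep_iff.1
      (causal_trans (sep_add_le htri) hmn hna))

theorem eventually_causal_of_exists (htri : ∀ x y z, ℓ x y + ℓ y z ≤ ℓ x z)
    (hrefl : ∀ x, 0 ≤ ℓ x x) (v : CausalSeq ℓ) {x : X} (h : ∃ m, causal ℓ x (v.1 m)) :
    ∀ᶠ m in atTop, causal ℓ x (v.1 m) :=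
  let ⟨m, hm⟩ := h
  eventually_atTop.2 ⟨m, fun _ hmn =>
    causal_trans htri hm (causal_of_le_of_chain htri hrefl v.2 hmn)⟩

theorem exists_diagonal (htri : ∀ x y z, ℓ x y + ℓ y z ≤ ℓ x z) (hrefl : ∀ x, 0 ≤ ℓ x x)
    {U : ℕ → CausalSeq ℓ} (hU : ∀ n, causal (sep ℓ) (U n) (U (n + 1))) :
    ∃ σ : ℕ → ℕ, (∀ n, causal ℓ ((U n).1 (σ n)) ((U (n + 1)).1 (σ (n + 1)))) ∧
      ∀ n j, ∃ m, causal ℓ ((U n).1 j) ((U m).1 (σ m)) := by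
  have step : ∀ n p, ∃ q, ∀ i ≤ n, ∀ j ≤ n + p, causal ℓ ((U i).1 j) ((U (n + 1)).1 q) := by
    intro n p
    refine Eventually.exists ((finite_Iic n).eventually_all.2 fun i hi =>
      (finite_Iic (n + p)).eventually_all.2 fun j _ => eventually_causal_of_exists htri hrefl _ ?_)
    exact causal_sep_iff.1 (causal_of_le_of_chain (sep_add_le htri)
      (sep_self_nonneg hrefl) hU (Nat.le_succ_of_le hi)) j
  choose next hnext using step
  let σ : ℕ → ℕ := fun n => Nat.rec 0 next n
  refine ⟨σ, fun n => hnext n (σ n) n le_rfl (σ n) (Nat.le_add_left _ _), fun n j => ?_⟩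
  exact ⟨n + j + 1, hnext (n + j) (σ (n + j)) n (Nat.le_add_right n j) j
    ((Nat.le_add_left j n).trans (Nat.le_add_right _ _))⟩

theorem forwardComplete (htri : ∀ x y z, ℓ x y + ℓ y z ≤ ℓ x z) (hrefl : ∀ x, 0 ≤ ℓ x x) :
    ForwardComplete (chronCausalTopology (sep ℓ)) (sep ℓ) := by
  intro U _ hU _
  obtain ⟨σ, hchain, hcofinal⟩ := exists_diagonal htri hrefl hU
  let w : CausalSeq ℓ := ⟨fun n => (U n).1 (σ n), hchain⟩
  refine ⟨w, tendsto_of_causal_of_eventually htri hrefl (fun n => causal_sep_iff.2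
    (hcofinal n)) fun m => eventually_atTop.2 ⟨m, fun n hmn => ?_⟩⟩
  exact causal_trans (sep_add_le htri) (causal_const_apply hrefl (U m) (σ m))
    (causal_of_le_of_chain (sep_add_le htri) (sep_self_nonneg hrefl) hU hmn)

theorem tendsto_const_apply (hbot : ∀ x y, ℓ x y = ⊥ ∨ 0 ≤ ℓ x y)
    (htri : ∀ x y z, ℓ x y + ℓ y z ≤ ℓ x z) (hrefl : ∀ x, 0 ≤ ℓ x x) (u : CausalSeq ℓ) :
    Tendsto (fun k => const hrefl (u.1 k)) atTop (@nhds _ (chronCausalTopology (sep ℓ)) u) :=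
  tendsto_of_causal_of_eventually htri hrefl (causal_const_apply hrefl u) fun m =>
    eventually_atTop.2 ⟨m, fun n hmn => by
      rw [causal, sep_const hbot htri hrefl]; exact causal_of_le_of_chain htri hrefl u.2 hmn⟩

theorem isForwardCompletion {tX : TopologicalSpace X} (hbot : ∀ x y, ℓ x y = ⊥ ∨ 0 ≤ ℓ x y)
    (htri : ∀ x y z, ℓ x y + ℓ y z ≤ ℓ x z) (hrefl : ∀ x, 0 ≤ ℓ x x) :
    IsForwardCompletion tX ℓ (chronCausalTopology (sep ℓ)) (sep ℓ) (const hrefl) where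
  lpls := isLPLS_chronCausalTopology (fun u v => seqSep_eq_bot_or_nonneg u.1 v.1)
    (sep_add_le htri) (sep_self_nonneg hrefl)
  fwdComplete := forwardComplete htri hrefl
  closed_Jplus := isClosed_chronCausalTopology_Jplus
  closed_Jminus := isClosed_chronCausalTopology_Jminus
  isometric := sep_const hbot htri hrefl
  fwdDense u := ⟨u.1, fun k => by rw [causal, sep_const hbot htri hrefl]; exact u.2 k,
    causal_const_apply hrefl u, tendsto_const_apply hbot htri hrefl u⟩

end CausalSeq

/-- **Existence of a forward completion** (Theorem 7.2, existence part).
Every Lorentzian pre-length space `(X, ℓ)` admits a forward completion `(X̄, ℓ̄)`. -/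
theorem forward_completion_exists {X : Type u} (tX : TopologicalSpace X)
    (ℓ : X → X → EReal) (h : IsLPLS tX ℓ) :
    ∃ (Y : Type u) (tY : TopologicalSpace Y) (ρ : Y → Y → EReal) (ι : X → Y),
      IsForwardCompletion tX ℓ tY ρ ι :=
  ⟨_, _, _, _, CausalSeq.isForwardCompletion h.bot_or_nonneg h.revTriangle h.refl_nonneg⟩
end
end

section
/- Uniqueness of the forward completion. Let (X, ℓ) be a Lorentzian pre-length space. Up to isometry there exists at most one forward completion (X̄, ℓ̄) of (X, ℓ) satisfying: (i) the time separation function τ̄ = max(0, ℓ̄) is continuous; (ii) the causal relation ≤̄ is a closed partial order; (iii) for all x̄ ∈ X̄ \ X one has x̄ ∈ closure(I⁺(x̄)) and x̄ ∈ closure(I⁻(x̄)). That is, any two forward completions satisfying (i)–(iii) are isometric. -/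
open Filter Topology Set

set_option linter.unusedVariables false

universe u v w

noncomputable section

/-- Continuity of the time separation function `τ` (jointly, w.r.t. the product topology). -/
def tauContinuous {X : Type u} (tX : TopologicalSpace X) (ℓ : X → X → EReal) : Prop :=
  letI := tX
  Continuous fun p : X × X => lorTau ℓ p.1 p.2

/-- Closedness of the causal relation in `X × X`. -/
def causalClosed {X : Type u} (tX : TopologicalSpace X) (ℓ : X → X → EReal) : Prop :=
  letI := tX
  IsClosed {p : X × X | causal ℓ p.1 p.2}

/-! A point `y` of a forward completion is determined by its separation profile
`x ↦ (ρ(ι x, y), ρ(y, ι x))`: by (iii) it is a limit of points `ι x` of its causal future, so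
closedness of `J⁺` and antisymmetry pin it down. Thus both completions embed into the space of
profiles, and it suffices that they realise the same profiles. For a new point `y`, push a
forward-dense sequence `ι (u k) → y` into the other completion: it converges by forward
completeness, and by continuity of `τ` the limit has the same `τ`-profile. A new point is
already determined by its `τ`-profile, so the limit is new as well; for new points causality
with `X` is determined by chronology with `X`, which recovers the full profile. The separation
of two points is then read off from their profiles by approximating the second one from its
causal future. -/

open Function

section LorentzianPreLength

variable {Y : Type v} {ρ : Y → Y → EReal} {a b c : Y}

lemma chron_iff_lorTau_pos : chron ρ a b ↔ 0 < lorTau ρ a b := by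
  simp [lorTau, chron]

lemma chron_iff_of_lorTau_eq {Z : Type w} {σ : Z → Z → EReal} {z w : Z}
    (h : lorTau ρ a b = lorTau σ z w) : chron ρ a b ↔ chron σ z w := by
  rw [chron_iff_lorTau_pos, chron_iff_lorTau_pos, h]

lemma eq_of_lorTau_eq_of_causal_iff {Z : Type w} {σ : Z → Z → EReal} {z w : Z}
    (hρ : ρ a b = ⊥ ∨ 0 ≤ ρ a b) (hσ : σ z w = ⊥ ∨ 0 ≤ σ z w)
    (hcausal : causal ρ a b ↔ causal σ z w) (hτ : lorTau ρ a b = lorTau σ z w) :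
    ρ a b = σ z w := by
  by_cases hab : causal ρ a b
  · rwa [lorTau, lorTau, max_eq_right hab, max_eq_right (hcausal.1 hab)] at hτ
  · rw [hρ.resolve_right hab, hσ.resolve_right (hcausal.not.1 hab)]

variable {tY : TopologicalSpace Y}

lemma IsLPLS.le_of_causal_left (h : IsLPLS tY ρ) (hab : causal ρ a b) : ρ b c ≤ ρ a c :=
  (le_add_of_nonneg_left hab).trans (h.revTriangle a b c)

lemma IsLPLS.le_of_causal_right (h : IsLPLS tY ρ) (hbc : causal ρ b c) : ρ a b ≤ ρ a c :=
  (le_add_of_nonneg_right hbc).trans (h.revTriangle a b c)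

lemma IsLPLS.lorTau_le_of_causal_right (h : IsLPLS tY ρ) (hbc : causal ρ b c) :
    lorTau ρ a b ≤ lorTau ρ a c :=
  max_le_max le_rfl (h.le_of_causal_right hbc)

lemma IsLPLS.causal_trans (h : IsLPLS tY ρ) (hab : causal ρ a b) (hbc : causal ρ b c) :
    causal ρ a c :=
  hab.trans (h.le_of_causal_right hbc)

lemma IsLPLS.chron_of_causal_of_chron (h : IsLPLS tY ρ) (hab : causal ρ a b)
    (hbc : chron ρ b c) : chron ρ a c :=
  hbc.trans_le (h.le_of_causal_left hab)

lemma IsLPLS.chron_of_chron_of_causal (h : IsLPLS tY ρ) (hab : chron ρ a b)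
    (hbc : causal ρ b c) : chron ρ a c :=
  hab.trans_le (h.le_of_causal_right hbc)

end LorentzianPreLength

def sepProfile {X : Type u} {Y : Type v} (ρ : Y → Y → EReal) (ι : X → Y) (y : Y) :
    X → EReal × EReal :=
  fun x => (ρ (ι x) y, ρ y (ι x))

def tauProfile {X : Type u} {Y : Type v} (ρ : Y → Y → EReal) (ι : X → Y) (y : Y) :
    X → EReal × EReal :=
  fun x => (lorTau ρ (ι x) y, lorTau ρ y (ι x))

/-- Condition (iii) of the theorem. -/
def ChronLimitOffRange {X : Type u} {Y : Type v} (tY : TopologicalSpace Y)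
    (ρ : Y → Y → EReal) (ι : X → Y) : Prop :=
  ∀ y, y ∉ Set.range ι →
    y ∈ @closure Y tY {w | chron ρ y w} ∧ y ∈ @closure Y tY {w | chron ρ w y}

section Profiles

variable {X : Type u} {Y : Type v} {Z : Type w}
  {ρ : Y → Y → EReal} {σ : Z → Z → EReal} {ι : X → Y} {κ : X → Z} {y a b : Y} {z w : Z}

lemma sepProfile_eq_iff :
    sepProfile σ κ z = sepProfile ρ ι y ↔ ∀ x, σ (κ x) z = ρ (ι x) y ∧ σ z (κ x) = ρ y (ι x) := by
  simp [funext_iff, sepProfile, Prod.ext_iff]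

lemma tauProfile_eq_iff :
    tauProfile σ κ z = tauProfile ρ ι y ↔
      ∀ x, lorTau σ (κ x) z = lorTau ρ (ι x) y ∧ lorTau σ z (κ x) = lorTau ρ y (ι x) := by
  simp [funext_iff, tauProfile, Prod.ext_iff]

lemma continuous_tauProfile [TopologicalSpace Y] (hτ : tauContinuous ‹_› ρ) (ι : X → Y) :
    Continuous (tauProfile ρ ι) := by
  have hτ' : Continuous fun p : Y × Y => lorTau ρ p.1 p.2 := hτ
  exact continuous_pi fun x => (hτ'.comp (continuous_const.prodMk continuous_id)).prodMk
    (hτ'.comp (continuous_id.prodMk continuous_const))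

variable {tX : TopologicalSpace X} {ℓ : X → X → EReal} [tY : TopologicalSpace Y]
  [tZ : TopologicalSpace Z]

namespace IsForwardCompletion

variable (hY : IsForwardCompletion tX ℓ tY ρ ι)
include hY

lemma causal_iff {x x' : X} : causal ρ (ι x) (ι x') ↔ causal ℓ x x' := by
  rw [causal, causal, hY.isometric]

lemma sepProfile_apply (x : X) : sepProfile ρ ι (ι x) = fun x' => (ℓ x' x, ℓ x x') := by
  funext x'
  simp only [sepProfile, hY.isometric]

lemma tauProfile_apply (x : X) :
    tauProfile ρ ι (ι x) = fun x' => (lorTau ℓ x' x, lorTau ℓ x x') := by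
  funext x'
  simp only [tauProfile, lorTau, hY.isometric]

lemma denseRange : DenseRange ι := fun y =>
  let ⟨u, _, _, hu⟩ := hY.fwdDense y
  mem_closure_of_tendsto hu (Eventually.of_forall fun k => mem_range_self (u k))

lemma closure_chronFuture_subset (y : Y) :
    closure {w | chron ρ y w} ⊆ closure (ι '' {x | chron ρ y (ι x)}) :=
  closure_minimal (hY.denseRange.subset_closure_image_preimage_of_isOpen
    (hY.lpls.open_Iplus y)) isClosed_closure

lemma closure_chronPast_subset (y : Y) :
    closure {w | chron ρ w y} ⊆ closure (ι '' {x | chron ρ (ι x) y}) :=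
  closure_minimal (hY.denseRange.subset_closure_image_preimage_of_isOpen
    (hY.lpls.open_Iminus y)) isClosed_closure

lemma causal_iff_of_mem_closure_chronFuture (hy : y ∈ closure {w | chron ρ y w}) (w : Y) :
    causal ρ w y ↔ ∀ x, chron ρ y (ι x) → causal ρ w (ι x) :=
  ⟨fun hwy _ hx => (hY.lpls.chron_of_causal_of_chron hwy hx).le, fun h =>
    (hY.closed_Jplus w).closure_subset_iff.2 (image_subset_iff.2 h)
      (hY.closure_chronFuture_subset y hy)⟩

lemma causal_iff_of_mem_closure_chronPast (hy : y ∈ closure {w | chron ρ w y}) (w : Y) :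
    causal ρ y w ↔ ∀ x, chron ρ (ι x) y → causal ρ (ι x) w :=
  ⟨fun hyw _ hx => (hY.lpls.chron_of_chron_of_causal hx hyw).le, fun h =>
    (hY.closed_Jminus w).closure_subset_iff.2 (image_subset_iff.2 h)
      (hY.closure_chronPast_subset y hy)⟩

lemma mem_of_isClosed_of_causalFuture (hbd : ChronLimitOffRange tY ρ ι) {S : Set Y}
    (hS : IsClosed S) (h : ∀ x, causal ρ y (ι x) → ι x ∈ S) : y ∈ S := by
  by_cases hy : y ∈ range ι
  · obtain ⟨x, rfl⟩ := hy
    exact h x (hY.lpls.refl_nonneg _)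
  · refine hS.closure_subset_iff.2 (image_subset_iff.2 fun x hx => h x (le_of_lt hx))
      (hY.closure_chronFuture_subset y (hbd y hy).1)

lemma sepProfile_injective (hant : ∀ a b : Y, causal ρ a b → causal ρ b a → a = b)
    (hbd : ChronLimitOffRange tY ρ ι) : Injective (sepProfile ρ ι) := by
  have hle {y y' : Y} (h : sepProfile ρ ι y = sepProfile ρ ι y') : causal ρ y y' :=
    hY.mem_of_isClosed_of_causalFuture hbd (hY.closed_Jplus y) fun x hx => by
      show causal ρ y (ι x)
      rwa [causal, ((sepProfile_eq_iff.1 h) x).2]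
  exact fun y y' h => hant y y' (hle h) (hle h.symm)

lemma eq_of_tauProfile_eq (hant : ∀ a b : Y, causal ρ a b → causal ρ b a → a = b)
    (hbd : ChronLimitOffRange tY ρ ι) {y' : Y} (hy : y ∉ range ι)
    (h : tauProfile ρ ι y' = tauProfile ρ ι y) : y = y' := by
  refine hant y y' ((hY.causal_iff_of_mem_closure_chronPast (hbd y hy).2 y').2 fun x hx => ?_)
    ((hY.causal_iff_of_mem_closure_chronFuture (hbd y hy).1 y').2 fun x hx => ?_)
  · exact ((chron_iff_of_lorTau_eq ((tauProfile_eq_iff.1 h) x).1).2 hx).le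
  · exact ((chron_iff_of_lorTau_eq ((tauProfile_eq_iff.1 h) x).2).2 hx).le

variable (hZ : IsForwardCompletion tX ℓ tZ σ κ)
include hZ

lemma exists_tauProfile_eq (hτY : tauContinuous tY ρ) (hτZ : tauContinuous tZ σ) {v : X}
    (hv : causal ρ y (ι v)) : ∃ z, tauProfile σ κ z = tauProfile ρ ι y := by
  obtain ⟨u, hmono, hle, hu⟩ := hY.fwdDense y
  obtain ⟨z, hz⟩ := hZ.fwdComplete (κ ∘ u) (κ v)
    (fun k => hZ.causal_iff.2 (hY.causal_iff.1 (hmono k)))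
    (fun k => hZ.causal_iff.2 (hY.causal_iff.1 (hY.lpls.causal_trans (hle k) hv)))
  have hlim := ((continuous_tauProfile hτY ι).tendsto y).comp hu
  have hprofile : (tauProfile ρ ι ∘ fun k => ι (u k)) = tauProfile σ κ ∘ κ ∘ u := by
    funext k
    simp only [comp_apply, hY.tauProfile_apply, hZ.tauProfile_apply]
  rw [hprofile] at hlim
  exact ⟨z, tendsto_nhds_unique (((continuous_tauProfile hτZ κ).tendsto z).comp hz) hlim⟩

lemma sepProfile_eq_of_tauProfile_eq (hbdY : ChronLimitOffRange tY ρ ι)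
    (hbdZ : ChronLimitOffRange tZ σ κ) (hy : y ∉ range ι) (hz : z ∉ range κ)
    (h : tauProfile σ κ z = tauProfile ρ ι y) : sepProfile σ κ z = sepProfile ρ ι y := by
  refine sepProfile_eq_iff.2 fun x => ⟨?_, ?_⟩
  · refine eq_of_lorTau_eq_of_causal_iff (hZ.lpls.bot_or_nonneg _ _) (hY.lpls.bot_or_nonneg _ _)
      ?_ ((tauProfile_eq_iff.1 h) x).1
    rw [hZ.causal_iff_of_mem_closure_chronFuture (hbdZ z hz).1,
      hY.causal_iff_of_mem_closure_chronFuture (hbdY y hy).1]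
    simp only [chron_iff_of_lorTau_eq ((tauProfile_eq_iff.1 h) _).2, hY.causal_iff,
      hZ.causal_iff]
  · refine eq_of_lorTau_eq_of_causal_iff (hZ.lpls.bot_or_nonneg _ _) (hY.lpls.bot_or_nonneg _ _)
      ?_ ((tauProfile_eq_iff.1 h) x).2
    rw [hZ.causal_iff_of_mem_closure_chronPast (hbdZ z hz).2,
      hY.causal_iff_of_mem_closure_chronPast (hbdY y hy).2]
    simp only [chron_iff_of_lorTau_eq ((tauProfile_eq_iff.1 h) _).1, hY.causal_iff,
      hZ.causal_iff]

lemma exists_sepProfile_eq (hτY : tauContinuous tY ρ) (hτZ : tauContinuous tZ σ)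
    (hantY : ∀ a b : Y, causal ρ a b → causal ρ b a → a = b)
    (hbdY : ChronLimitOffRange tY ρ ι) (hbdZ : ChronLimitOffRange tZ σ κ) (y : Y) :
    ∃ z, sepProfile σ κ z = sepProfile ρ ι y := by
  by_cases hy : y ∈ range ι
  · obtain ⟨x, rfl⟩ := hy
    exact ⟨κ x, by rw [hY.sepProfile_apply, hZ.sepProfile_apply]⟩
  obtain ⟨_, v, hv, rfl⟩ :=
    closure_nonempty_iff.1 ⟨y, hY.closure_chronFuture_subset y (hbdY y hy).1⟩
  obtain ⟨z, hz⟩ := hY.exists_tauProfile_eq hZ hτY hτZ (le_of_lt hv)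
  have hz_new : z ∉ range κ := by
    rintro ⟨x, rfl⟩
    refine hy ⟨x, (hY.eq_of_tauProfile_eq hantY hbdY hy ?_).symm⟩
    rw [← hz, hY.tauProfile_apply, hZ.tauProfile_apply]
  exact ⟨z, hY.sepProfile_eq_of_tauProfile_eq hZ hbdY hbdZ hy hz_new hz⟩

lemma causal_of_sepProfile_eq (hbdZ : ChronLimitOffRange tZ σ κ)
    (ha : sepProfile σ κ z = sepProfile ρ ι a) (hb : sepProfile σ κ w = sepProfile ρ ι b)
    (hab : causal ρ a b) : causal σ z w :=
  hZ.mem_of_isClosed_of_causalFuture hbdZ (hZ.closed_Jplus z) fun x hx => by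
    rw [causal, ((sepProfile_eq_iff.1 hb) x).2] at hx
    show 0 ≤ σ z (κ x)
    rw [((sepProfile_eq_iff.1 ha) x).2]
    exact hY.lpls.causal_trans hab hx

lemma lorTau_le_of_sepProfile_eq (hτZ : tauContinuous tZ σ) (hbdZ : ChronLimitOffRange tZ σ κ)
    (ha : sepProfile σ κ z = sepProfile ρ ι a) (hb : sepProfile σ κ w = sepProfile ρ ι b) :
    lorTau ρ a b ≤ lorTau σ z w := by
  have hτ : Continuous fun p : Z × Z => lorTau σ p.1 p.2 := hτZ
  refine hZ.mem_of_isClosed_of_causalFuture hbdZ (S := {v | lorTau ρ a b ≤ lorTau σ z v})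
    (isClosed_le continuous_const (hτ.comp (continuous_const.prodMk continuous_id)))
    fun x hx => ?_
  rw [causal, ((sepProfile_eq_iff.1 hb) x).2] at hx
  show _ ≤ max 0 (σ z (κ x))
  rw [((sepProfile_eq_iff.1 ha) x).2]
  exact hY.lpls.lorTau_le_of_causal_right hx

lemma sep_eq_of_sepProfile_eq (hτY : tauContinuous tY ρ) (hτZ : tauContinuous tZ σ)
    (hbdY : ChronLimitOffRange tY ρ ι) (hbdZ : ChronLimitOffRange tZ σ κ)
    (ha : sepProfile σ κ z = sepProfile ρ ι a) (hb : sepProfile σ κ w = sepProfile ρ ι b) :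
    σ z w = ρ a b :=
  eq_of_lorTau_eq_of_causal_iff (hZ.lpls.bot_or_nonneg z w) (hY.lpls.bot_or_nonneg a b)
    ⟨hZ.causal_of_sepProfile_eq hY hbdY ha.symm hb.symm, hY.causal_of_sepProfile_eq hZ hbdZ ha hb⟩
    (le_antisymm (hZ.lorTau_le_of_sepProfile_eq hY hτY hbdY ha.symm hb.symm)
      (hY.lorTau_le_of_sepProfile_eq hZ hτZ hbdZ ha hb))

end IsForwardCompletion

end Profiles

lemma exists_bijective_comp_eq_of_range_eq {α : Type u} {β : Type v} {γ : Type w}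
    {f : α → γ} {g : β → γ} (hf : Injective f) (hg : Injective g) (h : range f = range g) :
    ∃ e : α → β, Bijective e ∧ ∀ a, g (e a) = f a :=
  let e := (Equiv.ofInjective f hf).trans ((Equiv.setCongr h).trans (Equiv.ofInjective g hg).symm)
  ⟨e, e.bijective, fun a => Equiv.apply_ofInjective_symm hg _⟩

theorem forward_completion_unique_general {X : Type u} (tX : TopologicalSpace X)
    (ℓ : X → X → EReal)
    {Y : Type v} (tY : TopologicalSpace Y) (ρ : Y → Y → EReal) (ι : X → Y)
    {Z : Type w} (tZ : TopologicalSpace Z) (σ : Z → Z → EReal) (κ : X → Z)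
    (hY : IsForwardCompletion tX ℓ tY ρ ι)
    (hZ : IsForwardCompletion tX ℓ tZ σ κ)
    -- (i) continuity of the time separation functions
    (hτY : tauContinuous tY ρ) (hτZ : tauContinuous tZ σ)
    -- (ii) the causal relations are closed partial orders
    (hantY : ∀ a b : Y, causal ρ a b → causal ρ b a → a = b)
    (hantZ : ∀ a b : Z, causal σ a b → causal σ b a → a = b)
    -- (iii) points of the completion not coming from `X` lie in the closure of their
    -- own chronological future and past
    (hbdY : ∀ y : Y, y ∉ Set.range ι →
      y ∈ @closure Y tY {z | chron ρ y z} ∧ y ∈ @closure Y tY {z | chron ρ z y})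
    (hbdZ : ∀ z : Z, z ∉ Set.range κ →
      z ∈ @closure Z tZ {w | chron σ z w} ∧ z ∈ @closure Z tZ {w | chron σ w z}) :
    ∃ f : Y → Z, Function.Bijective f ∧ ∀ a b : Y, σ (f a) (f b) = ρ a b := by
  have hrange : range (sepProfile ρ ι) = range (sepProfile σ κ) :=
    Subset.antisymm (range_subset_iff.2 (hY.exists_sepProfile_eq hZ hτY hτZ hantY hbdY hbdZ))
      (range_subset_iff.2 (hZ.exists_sepProfile_eq hY hτZ hτY hantZ hbdZ hbdY))
  obtain ⟨f, hf, hprofile⟩ := exists_bijective_comp_eq_of_range_eq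
    (hY.sepProfile_injective hantY hbdY) (hZ.sepProfile_injective hantZ hbdZ) hrange
  exact ⟨f, hf, fun a b =>
    hY.sep_eq_of_sepProfile_eq hZ hτY hτZ hbdY hbdZ (hprofile a) (hprofile b)⟩

/-- **Uniqueness of the forward completion** (Theorem 7.2, uniqueness part).
Any two forward completions of a Lorentzian pre-length space `(X, ℓ)` satisfying
(i) continuity of the time separation function, (ii) the causal relation is a closed
partial order, (iii) every new point is in the closure of its own chronological future
and past, are isometric. -/
theorem forward_completion_unique {X : Type u} (tX : TopologicalSpace X)
    (ℓ : X → X → EReal) (h : IsLPLS tX ℓ)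
    {Y : Type v} (tY : TopologicalSpace Y) (ρ : Y → Y → EReal) (ι : X → Y)
    {Z : Type w} (tZ : TopologicalSpace Z) (σ : Z → Z → EReal) (κ : X → Z)
    (hY : IsForwardCompletion tX ℓ tY ρ ι)
    (hZ : IsForwardCompletion tX ℓ tZ σ κ)
    -- (i) continuity of the time separation functions
    (hτY : tauContinuous tY ρ) (hτZ : tauContinuous tZ σ)
    -- (ii) the causal relations are closed partial orders
    (hclY : causalClosed tY ρ) (hclZ : causalClosed tZ σ)
    (hantY : ∀ a b : Y, causal ρ a b → causal ρ b a → a = b)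
    (hantZ : ∀ a b : Z, causal σ a b → causal σ b a → a = b)
    -- (iii) points of the completion not coming from `X` lie in the closure of their
    -- own chronological future and past
    (hbdY : ∀ y : Y, y ∉ Set.range ι →
      y ∈ @closure Y tY {z | chron ρ y z} ∧ y ∈ @closure Y tY {z | chron ρ z y})
    (hbdZ : ∀ z : Z, z ∉ Set.range κ →
      z ∈ @closure Z tZ {w | chron σ z w} ∧ z ∈ @closure Z tZ {w | chron σ w z}) :
    ∃ f : Y → Z, Function.Bijective f ∧ ∀ a b : Y, σ (f a) (f b) = ρ a b :=
  forward_completion_unique_general tX ℓ tY ρ ι tZ σ κ hY hZ hτY hτZ hantY hantZ hbdY hbdZ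

end
end

section
/- Time separation quotient preserves limits. Let (X_n, ℓ_n, o_n, 𝒰_n) →pLGH (X, ℓ, o, 𝒰) (respectively, strongly), with 𝒰 = (U_k)_{k∈ℕ}. Define on X the equivalence relation x ∼ y iff ℓ(x,z) = ℓ(y,z) and ℓ(z,x) = ℓ(z,y) for all z ∈ X, let π : X → X/∼ be the quotient map, and let ℓ^∼([x],[y]) := ℓ(x,y) be the quotient time separation on X/∼ with the quotient topology. Then (X_n, ℓ_n, o_n, 𝒰_n) →pLGH (X/∼, ℓ^∼, π(o), (π(U_k))_{k∈ℕ}) (respectively, strongly). -/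
open Filter Topology Set

set_option linter.unusedVariables false

universe u v w

noncomputable section

/-- An ε-net for `A`: a finite collection of causal diamonds (given by their pairs of
vertices) of timelike diameter at most `ε` covering `A`. -/
def IsLorNet {X : Type u} (ℓ : X → X → EReal) (ε : ℝ) (A : Set X)
    (S : Finset (X × X)) : Prop :=
  (∀ pq ∈ S, lorTau ℓ pq.1 pq.2 ≤ (ε : EReal)) ∧
  A ⊆ ⋃ pq ∈ S, diamondJ ℓ pq.1 pq.2

/-- The set of vertices of a collection of causal diamonds. -/
def netVerts {X : Type u} (S : Finset (X × X)) : Set X :=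
  {x | ∃ pq ∈ S, pq.1 = x ∨ pq.2 = x}

/-- `|a - b|` with the conventions `±∞ − ±∞ = 0` and `±∞ − ∓∞ = +∞`. -/
def lorDiff (a b : EReal) : EReal :=
  if a = b then 0
  else if a = ⊥ ∨ b = ⊥ ∨ a = ⊤ ∨ b = ⊤ then ⊤
  else ((|a.toReal - b.toReal| : ℝ) : EReal)

/-- A correspondence between `A ⊆ X` and `B ⊆ Y`. -/
def IsCorresp {X : Type u} {Y : Type v} (R : Set (X × Y)) (A : Set X) (B : Set Y) : Prop :=
  (∀ p ∈ R, p.1 ∈ A ∧ p.2 ∈ B) ∧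
  (∀ a ∈ A, ∃ b ∈ B, (a, b) ∈ R) ∧
  (∀ b ∈ B, ∃ a ∈ A, (a, b) ∈ R)

/-- The distortion of a relation `R ⊆ X × Y` w.r.t. time separations `ℓ, ρ`. -/
def distortion {X : Type u} {Y : Type v} (ℓ : X → X → EReal) (ρ : Y → Y → EReal)
    (R : Set (X × Y)) : EReal :=
  ⨆ p ∈ R, ⨆ q ∈ R, lorDiff (ℓ p.1 q.1) (ρ p.2 q.2)

/-- The graph of `f` restricted to `A`. -/
def lorGraphOn {X : Type u} {Y : Type v} (f : X → Y) (A : Set X) : Set (X × Y) :=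
  (fun x => (x, f x)) '' A

/-- `f` realizes a correspondence between `A` and `B`. -/
def RealizesCorresp {X : Type u} {Y : Type v} (f : X → Y) (A : Set X) (B : Set Y) : Prop :=
  IsCorresp (lorGraphOn f A) A B

/-- The distortion of the map `f` on `A`. -/
def mapDistortion {X : Type u} {Y : Type v} (ℓ : X → X → EReal) (ρ : Y → Y → EReal)
    (f : X → Y) (A : Set X) : EReal :=
  distortion ℓ ρ (lorGraphOn f A)

/-- Clauses (i)+(ii) of LGH convergence of subsets: finite ε-nets of the same cardinality
with correspondences of the vertices whose distortions tend to `0`. -/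
def LGHNets {Xn : ℕ → Type u} (ℓn : ∀ n, Xn n → Xn n → EReal) (An : ∀ n, Set (Xn n))
    {X : Type v} (ℓ : X → X → EReal) (A : Set X) : Prop :=
  ∀ ε : ℝ, 0 < ε → ∃ n₀ : ℕ, ∃ S : Finset (X × X),
    ∃ Sn : ∀ n, Finset (Xn n × Xn n), ∃ R : ∀ n, Set (Xn n × X),
      IsLorNet ℓ ε A S ∧
      (∀ n, n₀ ≤ n → IsLorNet (ℓn n) ε (An n) (Sn n) ∧ (Sn n).card = S.card ∧
        IsCorresp (R n) (netVerts (Sn n)) (netVerts S)) ∧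
      Tendsto (fun n => distortion (ℓn n) ℓ (R n)) atTop (nhds 0)

/-- Clause (iii) of LGH convergence of subsets: the extension property of correspondences. -/
def LGHExtension {Xn : ℕ → Type u} (ℓn : ∀ n, Xn n → Xn n → EReal) (An : ∀ n, Set (Xn n))
    {X : Type v} (ℓ : X → X → EReal) (A : Set X) : Prop :=
  ∀ l : ℕ, 1 ≤ l →
  ∀ S S' : Finset (X × X), IsLorNet ℓ (1 / (l : ℝ)) A S →
    IsLorNet ℓ (1 / ((l : ℝ) + 1)) A S' →
  ∀ Sn Sn' : ∀ n, Finset (Xn n × Xn n),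
    (∀ n, IsLorNet (ℓn n) (1 / (l : ℝ)) (An n) (Sn n)) →
    (∀ n, IsLorNet (ℓn n) (1 / ((l : ℝ) + 1)) (An n) (Sn' n)) →
  ∀ f : ∀ n, X → Xn n, (∀ n, RealizesCorresp (f n) (netVerts S) (netVerts (Sn n))) →
  ∀ n : ℕ, ∃ n', n ≤ n' ∧ ∃ g : X → Xn n',
    (∀ x ∈ netVerts S, g x = f n' x) ∧
    RealizesCorresp g (netVerts S ∪ netVerts S') (netVerts (Sn n') ∪ netVerts (Sn' n')) ∧
    mapDistortion ℓ (ℓn n') g (netVerts S ∪ netVerts S') ≤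
      mapDistortion ℓ (ℓn n') (f n') (netVerts S)

/-- Clause (iv) of LGH convergence of subsets (forward density), with respect to a
relation `rel` (the causal relation for plain convergence, the chronological relation
for strong convergence). -/
def LGHFwdDenseWith {X : Type v} (tX : TopologicalSpace X) (ℓ : X → X → EReal)
    (rel : X → X → Prop) (A : Set X) : Prop :=
  ∀ S : ℕ → Finset (X × X), (∀ l : ℕ, 1 ≤ l → IsLorNet ℓ (1 / (l : ℝ)) A (S l)) →
    ∀ x ∈ A \ ⋃ l ∈ {l : ℕ | 1 ≤ l}, netVerts (S l),
      ∃ u : ℕ → X, (∀ k, u k ∈ ⋃ l ∈ {l : ℕ | 1 ≤ l}, netVerts (S l)) ∧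
        (∀ k, rel (u k) (u (k + 1))) ∧ (∀ k, rel (u k) x) ∧
        Tendsto u atTop (@nhds X tX x)

/-- Lorentzian Gromov–Hausdorff convergence of the subsets `An n ⊆ Xn n` to `A ⊆ X`. -/
def LGHConv (Xn : ℕ → Type u) (ℓn : ∀ n, Xn n → Xn n → EReal) (An : ∀ n, Set (Xn n))
    (X : Type v) (tX : TopologicalSpace X) (ℓ : X → X → EReal) (A : Set X) : Prop :=
  LGHNets ℓn An ℓ A ∧ LGHExtension ℓn An ℓ A ∧ LGHFwdDenseWith tX ℓ (causal ℓ) A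

/-- Strong Lorentzian Gromov–Hausdorff convergence of subsets (timelike forward density). -/
def LGHConvStrong (Xn : ℕ → Type u) (ℓn : ∀ n, Xn n → Xn n → EReal) (An : ∀ n, Set (Xn n))
    (X : Type v) (tX : TopologicalSpace X) (ℓ : X → X → EReal) (A : Set X) : Prop :=
  LGHNets ℓn An ℓ A ∧ LGHExtension ℓn An ℓ A ∧ LGHFwdDenseWith tX ℓ (chron ℓ) A

/-- A covered Lorentzian pre-length space `(X, ℓ, o, U)`. -/
structure IsCoveredLPLS {X : Type u} (tX : TopologicalSpace X) (ℓ : X → X → EReal)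
    (o : X) (U : ℕ → Set X) : Prop where
  lpls : IsLPLS tX ℓ
  iUnion_eq : (⋃ k, U k) = Set.univ
  mono : ∀ k, U k ⊆ U (k + 1)
  base_mem : ∀ k, o ∈ U k
  tau_bdd : ∀ k, ∃ T : ℝ, ∀ x ∈ U k, ∀ y ∈ U k, lorTau ℓ x y ≤ (T : EReal)

/-- Pointed Lorentzian Gromov–Hausdorff convergence of covered Lorentzian pre-length
spaces: LGH convergence of the `k`-th covering sets, for every `k`. -/
def pLGHConv (Xn : ℕ → Type u) (tXn : ∀ n, TopologicalSpace (Xn n))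
    (ℓn : ∀ n, Xn n → Xn n → EReal) (on' : ∀ n, Xn n) (Un : ∀ n, ℕ → Set (Xn n))
    (X : Type v) (tX : TopologicalSpace X) (ℓ : X → X → EReal) (o : X)
    (U : ℕ → Set X) : Prop :=
  ∀ k, LGHConv Xn ℓn (fun n => Un n k) X tX ℓ (U k)

/-- Strong pointed Lorentzian Gromov–Hausdorff convergence. -/
def pLGHConvStrong (Xn : ℕ → Type u) (tXn : ∀ n, TopologicalSpace (Xn n))
    (ℓn : ∀ n, Xn n → Xn n → EReal) (on' : ∀ n, Xn n) (Un : ∀ n, ℕ → Set (Xn n))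
    (X : Type v) (tX : TopologicalSpace X) (ℓ : X → X → EReal) (o : X)
    (U : ℕ → Set X) : Prop :=
  ∀ k, LGHConvStrong Xn ℓn (fun n => Un n k) X tX ℓ (U k)


/-- The relation identifying points with the same time separations from all other
points. -/
def lorSetoid {X : Type v} (ℓ : X → X → EReal) : Setoid X where
  r x y := ∀ z, ℓ x z = ℓ y z ∧ ℓ z x = ℓ z y
  iseqv := ⟨fun _ _ => ⟨rfl, rfl⟩,
    fun h z => ⟨(h z).1.symm, (h z).2.symm⟩,
    fun h1 h2 z => ⟨(h1 z).1.trans (h2 z).1, (h1 z).2.trans (h2 z).2⟩⟩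

/-- The quotient time separation function on `X/∼`. -/
def lorQuotSep {X : Type v} (ℓ : X → X → EReal) :
    Quotient (lorSetoid ℓ) → Quotient (lorSetoid ℓ) → EReal :=
  Quotient.lift₂ ℓ fun a₁ b₁ a₂ b₂ ha hb =>
    ((ha b₁).1).trans ((hb a₂).2)

/-- The quotient topology on `X/∼`. -/
def lorQuotTop {X : Type v} (tX : TopologicalSpace X) (ℓ : X → X → EReal) :
    TopologicalSpace (Quotient (lorSetoid ℓ)) :=
  TopologicalSpace.coinduced (Quotient.mk (lorSetoid ℓ)) tX

/-!
The quotient map `π : X → X/∼` preserves `ℓ` exactly, so nets, correspondences and distortions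
pass to the quotient (and back, along a choice of representatives), and forward density passes
through the continuous map `π`. The one obstruction is that the nets in clause (ii) must have
equal cardinalities, while `π` may merge diamonds of a net `S` of `X`. Starting from
`ε/2`-nets, the image of `S` is padded with short pairs of vertex classes up to
`min |S| |P|`, where `P` is the set of all such pairs. When `|P| < |S|` the approximating nets
are thinned instead: two of their diamonds whose vertices correspond to the same classes are
nested, since a finite distortion cannot move a value `ℓ ≥ 0` to `-∞`.
-/

section LorDiff

lemma lorDiff_nonneg (a b : EReal) : 0 ≤ lorDiff a b := by
  unfold lorDiff
  split_ifs
  · exact le_rfl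
  · exact le_top
  · exact_mod_cast abs_nonneg _

lemma lorDiff_comm (a b : EReal) : lorDiff a b = lorDiff b a := by
  unfold lorDiff
  simp only [eq_comm (a := a), abs_sub_comm]
  congr 2
  exact propext (by tauto)

variable {a b : EReal} {d : ℝ}

lemma eq_bot_iff_of_lorDiff_le_coe (h : lorDiff a b ≤ d) : a = ⊥ ↔ b = ⊥ := by
  unfold lorDiff at h
  split_ifs at h with hab hinf
  · rw [hab]
  · exact absurd (top_le_iff.mp h) (EReal.coe_ne_top d)
  · tauto

lemma le_add_of_lorDiff_le_coe (h : lorDiff a b ≤ d) : a ≤ b + d := by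
  have hd : (0 : EReal) ≤ d := (lorDiff_nonneg a b).trans h
  unfold lorDiff at h
  split_ifs at h with hab hinf
  · rw [hab]; exact le_add_of_nonneg_right hd
  · exact absurd (top_le_iff.mp h) (EReal.coe_ne_top d)
  · simp only [not_or] at hinf
    obtain ⟨ha, hb, ha', hb'⟩ := hinf
    lift a to ℝ using ⟨ha', ha⟩
    lift b to ℝ using ⟨hb', hb⟩
    norm_cast at h ⊢
    simp only [EReal.toReal_coe] at h
    linarith [le_abs_self (a - b)]

end LorDiff

section Distortion

variable {X : Type u} {Y : Type v} {ℓ : X → X → EReal} {ρ : Y → Y → EReal} {R R' : Set (X × Y)}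

lemma lorDiff_le_distortion {p q : X × Y} (hp : p ∈ R) (hq : q ∈ R) :
    lorDiff (ℓ p.1 q.1) (ρ p.2 q.2) ≤ distortion ℓ ρ R :=
  le_iSup₂_of_le p hp (le_iSup₂_of_le q hq le_rfl)

lemma distortion_le_iff {c : EReal} :
    distortion ℓ ρ R ≤ c ↔ ∀ p ∈ R, ∀ q ∈ R, lorDiff (ℓ p.1 q.1) (ρ p.2 q.2) ≤ c := by
  simp only [distortion, iSup₂_le_iff]

lemma distortion_mono (h : R ⊆ R') : distortion ℓ ρ R ≤ distortion ℓ ρ R' :=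
  distortion_le_iff.mpr fun _ hp _ hq => lorDiff_le_distortion (h hp) (h hq)

lemma distortion_nonneg (h : R.Nonempty) : 0 ≤ distortion ℓ ρ R :=
  (lorDiff_nonneg _ _).trans (lorDiff_le_distortion h.some_mem h.some_mem)

lemma distortion_image_prodMap {X' : Type w} {Y' : Type*} {ℓ' : X' → X' → EReal}
    {ρ' : Y' → Y' → EReal} (e : X → X') (f : Y → Y')
    (he : ∀ x y, ℓ' (e x) (e y) = ℓ x y) (hf : ∀ x y, ρ' (f x) (f y) = ρ x y) :
    distortion ℓ' ρ' (Prod.map e f '' R) = distortion ℓ ρ R := by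
  simp only [distortion, iSup_image, Prod.map_fst, Prod.map_snd, he, hf]

lemma mapDistortion_comp {X' : Type w} {ℓ' : X' → X' → EReal} (e : X → X') (g : X' → Y)
    (A : Set X) (he : ∀ x y, ℓ' (e x) (e y) = ℓ x y) :
    mapDistortion ℓ ρ (g ∘ e) A = mapDistortion ℓ' ρ g (e '' A) := by
  have hgraph : lorGraphOn g (e '' A) = Prod.map e id '' lorGraphOn (g ∘ e) A := by
    simp only [lorGraphOn, Set.image_image, Prod.map_apply, id, Function.comp]
  rw [mapDistortion, mapDistortion, hgraph,
    distortion_image_prodMap (ρ := ρ) e id he fun _ _ => rfl]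

lemma realizesCorresp_iff_image_eq {f : X → Y} {A : Set X} {B : Set Y} :
    RealizesCorresp f A B ↔ f '' A = B := by
  constructor
  · rintro ⟨hmaps, -, hsurj⟩
    refine Set.Subset.antisymm (Set.image_subset_iff.mpr fun x hx => ?_) fun b hb => ?_
    · exact (hmaps _ ⟨x, hx, rfl⟩).2
    · obtain ⟨a, -, x, hx, hxa⟩ := hsurj b hb
      exact ⟨x, hx, congrArg Prod.snd hxa⟩
  · rintro rfl
    refine ⟨?_, fun a ha => ⟨f a, ⟨a, ha, rfl⟩, a, ha, rfl⟩, ?_⟩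
    · rintro _ ⟨x, hx, rfl⟩
      exact ⟨hx, x, hx, rfl⟩
    · rintro _ ⟨x, hx, rfl⟩
      exact ⟨x, hx, x, hx, rfl⟩

end Distortion

section Nets

variable {X : Type u} {ℓ : X → X → EReal} {ε : ℝ} {A : Set X} {S T : Finset (X × X)}

lemma mem_netVerts {x : X} : x ∈ netVerts S ↔ ∃ pq ∈ S, pq.1 = x ∨ pq.2 = x := Iff.rfl

lemma fst_mem_netVerts {pq : X × X} (h : pq ∈ S) : pq.1 ∈ netVerts S := ⟨pq, h, Or.inl rfl⟩

lemma snd_mem_netVerts {pq : X × X} (h : pq ∈ S) : pq.2 ∈ netVerts S := ⟨pq, h, Or.inr rfl⟩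

lemma netVerts_mono (h : S ⊆ T) : netVerts S ⊆ netVerts T :=
  fun _ ⟨pq, hpq, hx⟩ => ⟨pq, h hpq, hx⟩

lemma netVerts_image_prodMap {Y : Type v} [DecidableEq (Y × Y)] (f : X → Y) :
    netVerts (S.image (Prod.map f f)) = f '' netVerts S := by
  ext y
  simp only [mem_netVerts, Finset.exists_mem_image, Prod.map_fst, Prod.map_snd, Set.mem_image]
  constructor
  · rintro ⟨pq, hpq, rfl | rfl⟩
    exacts [⟨_, ⟨pq, hpq, Or.inl rfl⟩, rfl⟩, ⟨_, ⟨pq, hpq, Or.inr rfl⟩, rfl⟩]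
  · rintro ⟨x, ⟨pq, hpq, rfl | rfl⟩, rfl⟩
    exacts [⟨pq, hpq, Or.inl rfl⟩, ⟨pq, hpq, Or.inr rfl⟩]

lemma IsLorNet.mono_eps {ε' : ℝ} (h : IsLorNet ℓ ε A S) (hε : ε ≤ ε') : IsLorNet ℓ ε' A S :=
  ⟨fun pq hpq => (h.1 pq hpq).trans (EReal.coe_le_coe_iff.mpr hε), h.2⟩

open Classical in
def netVertFinset (S : Finset (X × X)) : Finset X := S.image Prod.fst ∪ S.image Prod.snd

lemma mem_netVertFinset {x : X} : x ∈ netVertFinset S ↔ x ∈ netVerts S := by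
  classical
  simp only [netVertFinset, Finset.mem_union, Finset.mem_image, mem_netVerts]
  constructor
  · rintro (⟨pq, h, rfl⟩ | ⟨pq, h, rfl⟩)
    exacts [⟨pq, h, Or.inl rfl⟩, ⟨pq, h, Or.inr rfl⟩]
  · rintro ⟨pq, h, rfl | rfl⟩
    exacts [Or.inl ⟨pq, h, rfl⟩, Or.inr ⟨pq, h, rfl⟩]

open Classical in
def shortVertexPairs (ℓ : X → X → EReal) (ε : ℝ) (S : Finset (X × X)) : Finset (X × X) :=
  (netVertFinset S ×ˢ netVertFinset S).filter fun pq => lorTau ℓ pq.1 pq.2 ≤ ε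

lemma mem_shortVertexPairs {pq : X × X} :
    pq ∈ shortVertexPairs ℓ ε S ↔
      pq.1 ∈ netVerts S ∧ pq.2 ∈ netVerts S ∧ lorTau ℓ pq.1 pq.2 ≤ ε := by
  simp only [shortVertexPairs, Finset.mem_filter, Finset.mem_product, mem_netVertFinset,
    and_assoc]

lemma IsLorNet.subset_shortVertexPairs (hS : IsLorNet ℓ ε A S) :
    S ⊆ shortVertexPairs ℓ ε S := fun pq hpq =>
  mem_shortVertexPairs.mpr ⟨fst_mem_netVerts hpq, snd_mem_netVerts hpq, hS.1 pq hpq⟩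

lemma IsLorNet.exists_card_eq (hS : IsLorNet ℓ ε A S) {N : ℕ} (h₁ : S.card ≤ N)
    (h₂ : N ≤ (shortVertexPairs ℓ ε S).card) :
    ∃ S', IsLorNet ℓ ε A S' ∧ S'.card = N ∧ netVerts S' = netVerts S := by
  obtain ⟨S', hSS', hS'P, hcard⟩ :=
    Finset.exists_subsuperset_card_eq hS.subset_shortVertexPairs h₁ h₂
  refine ⟨S', ⟨fun pq hpq => (mem_shortVertexPairs.mp (hS'P hpq)).2.2, ?_⟩, hcard, ?_⟩
  · exact hS.2.trans (Set.biUnion_subset_biUnion_left fun pq hpq => hSS' hpq)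
  · refine Set.Subset.antisymm ?_ (netVerts_mono hSS')
    rintro x ⟨pq, hpq, rfl | rfl⟩
    exacts [(mem_shortVertexPairs.mp (hS'P hpq)).1, (mem_shortVertexPairs.mp (hS'P hpq)).2.1]

end Nets

section LPLS

variable {X : Type u} {tX : TopologicalSpace X} {ℓ : X → X → EReal}

lemma IsLPLS.causal_of_ne_bot (hX : IsLPLS tX ℓ) {x y : X} (h : ℓ x y ≠ ⊥) : causal ℓ x y :=
  (hX.bot_or_nonneg x y).resolve_left h

lemma IsLPLS.diamondJ_subset (hX : IsLPLS tX ℓ) {p q p' q' : X} (hp : causal ℓ p p')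
    (hq : causal ℓ q' q) : diamondJ ℓ p' q' ⊆ diamondJ ℓ p q :=
  fun _ ⟨hz₁, hz₂⟩ => ⟨(add_nonneg hp hz₁).trans (hX.revTriangle _ _ _),
    (add_nonneg hz₂ hq).trans (hX.revTriangle _ _ _)⟩

lemma IsCoveredLPLS.sep_self_eq_zero {o : X} {U : ℕ → Set X} (hX : IsCoveredLPLS tX ℓ o U)
    (x : X) : ℓ x x = 0 := by
  obtain ⟨k, hk⟩ := Set.mem_iUnion.mp (hX.iUnion_eq ▸ Set.mem_univ x)
  obtain ⟨T, hT⟩ := hX.tau_bdd k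
  have hbdd : ℓ x x ≤ T := (le_max_right _ _).trans (hT x hk x hk)
  have hnonneg := hX.lpls.refl_nonneg x
  have htri := hX.lpls.revTriangle x x x
  generalize ℓ x x = a at *
  induction a with
  | bot => exact absurd hnonneg (by simp)
  | top => exact absurd hbdd (by simp)
  | coe r =>
    norm_cast at hnonneg htri ⊢
    linarith

end LPLS

section Quotient

variable {X : Type v} {ℓ : X → X → EReal}

lemma lorQuotSep_mk (x y : X) :
    lorQuotSep ℓ (Quotient.mk (lorSetoid ℓ) x) (Quotient.mk (lorSetoid ℓ) y) = ℓ x y := rfl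

lemma lorQuotSep_out_mk (c : Quotient (lorSetoid ℓ)) (x : X) :
    lorQuotSep ℓ c (Quotient.mk (lorSetoid ℓ) x) = ℓ c.out x := by
  conv_lhs => rw [← Quotient.out_eq c]
  rfl

lemma lorQuotSep_mk_out (x : X) (c : Quotient (lorSetoid ℓ)) :
    lorQuotSep ℓ (Quotient.mk (lorSetoid ℓ) x) c = ℓ x c.out := by
  conv_lhs => rw [← Quotient.out_eq c]
  rfl

lemma lorQuotSep_eq_out (c d : Quotient (lorSetoid ℓ)) : lorQuotSep ℓ c d = ℓ c.out d.out := by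
  rw [← lorQuotSep_out_mk c d.out, Quotient.out_eq]

lemma sep_nonneg_of_mk_eq (h₀ : ∀ x, 0 ≤ ℓ x x) {x y : X}
    (h : Quotient.mk (lorSetoid ℓ) x = Quotient.mk (lorSetoid ℓ) y) : 0 ≤ ℓ x y :=
  (Quotient.exact h y).1 ▸ h₀ y

variable {ε : ℝ} {A : Set X}

lemma IsLorNet.image_mk [DecidableEq (Quotient (lorSetoid ℓ) × Quotient (lorSetoid ℓ))]
    {S : Finset (X × X)} (h : IsLorNet ℓ ε A S) :
    IsLorNet (lorQuotSep ℓ) ε (Quotient.mk (lorSetoid ℓ) '' A)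
      (S.image (Prod.map (Quotient.mk (lorSetoid ℓ)) (Quotient.mk (lorSetoid ℓ)))) := by
  refine ⟨fun _ hmem => ?_, ?_⟩
  · obtain ⟨pq, hpq, rfl⟩ := Finset.mem_image.mp hmem
    exact h.1 pq hpq
  · rintro _ ⟨x, hx, rfl⟩
    obtain ⟨pq, hpq, hxJ⟩ := Set.mem_iUnion₂.mp (h.2 hx)
    exact Set.mem_iUnion₂.mpr ⟨_, Finset.mem_image_of_mem _ hpq, hxJ⟩

lemma IsLorNet.image_out [DecidableEq (X × X)]
    {Sq : Finset (Quotient (lorSetoid ℓ) × Quotient (lorSetoid ℓ))}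
    (h : IsLorNet (lorQuotSep ℓ) ε (Quotient.mk (lorSetoid ℓ) '' A) Sq) :
    IsLorNet ℓ ε A (Sq.image (Prod.map Quotient.out Quotient.out)) := by
  refine ⟨fun _ hpq => ?_, fun x hx => ?_⟩
  · obtain ⟨cd, hcd, rfl⟩ := Finset.mem_image.mp hpq
    simpa only [lorTau, lorQuotSep_eq_out, Prod.map_fst, Prod.map_snd] using h.1 cd hcd
  · obtain ⟨cd, hcd, hxJ₁, hxJ₂⟩ := Set.mem_iUnion₂.mp (h.2 ⟨x, hx, rfl⟩)
    refine Set.mem_iUnion₂.mpr ⟨_, Finset.mem_image_of_mem _ hcd, ?_, ?_⟩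
    · simpa only [causal, lorQuotSep_out_mk, Prod.map_fst] using hxJ₁
    · simpa only [causal, lorQuotSep_mk_out, Prod.map_snd] using hxJ₂

lemma netVerts_image_out [DecidableEq (X × X)]
    (Sq : Finset (Quotient (lorSetoid ℓ) × Quotient (lorSetoid ℓ))) :
    Quotient.mk (lorSetoid ℓ) '' netVerts (Sq.image (Prod.map Quotient.out Quotient.out)) =
      netVerts Sq := by
  rw [netVerts_image_prodMap, Set.image_image]
  simp only [Quotient.out_eq, Set.image_id']

end Quotient

section Quotient

variable {X : Type v} {ℓ : X → X → EReal} {A : Set X}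

lemma LGHFwdDenseWith.quotient {tX : TopologicalSpace X} (P : EReal → Prop)
    (h : LGHFwdDenseWith tX ℓ (fun x y => P (ℓ x y)) A) :
    LGHFwdDenseWith (lorQuotTop tX ℓ) (lorQuotSep ℓ) (fun c d => P (lorQuotSep ℓ c d))
      (Quotient.mk (lorSetoid ℓ) '' A) := by
  classical
  rintro Sq hSq _ ⟨⟨a, haA, rfl⟩, haV⟩
  set S := fun l => (Sq l).image (Prod.map Quotient.out Quotient.out)
  have hmk : ∀ x ∈ ⋃ l ∈ {l : ℕ | 1 ≤ l}, netVerts (S l),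
      Quotient.mk (lorSetoid ℓ) x ∈ ⋃ l ∈ {l : ℕ | 1 ≤ l}, netVerts (Sq l) := by
    intro x hx
    obtain ⟨l, hl, hx⟩ := Set.mem_iUnion₂.mp hx
    exact Set.mem_iUnion₂.mpr ⟨l, hl, netVerts_image_out (Sq l) ▸ Set.mem_image_of_mem _ hx⟩
  obtain ⟨u, hu, hrel, hrelx, hlim⟩ :=
    h S (fun l hl => (hSq l hl).image_out) a ⟨haA, fun ha => haV (hmk a ha)⟩
  exact ⟨fun k => Quotient.mk _ (u k), fun k => hmk _ (hu k), hrel, hrelx,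
    (continuous_coinduced_rng.tendsto a).comp hlim⟩

lemma LGHExtension.quotient {Xn : ℕ → Type u} {ℓn : ∀ n, Xn n → Xn n → EReal}
    {An : ∀ n, Set (Xn n)} (h : LGHExtension ℓn An ℓ A) :
    LGHExtension ℓn An (lorQuotSep ℓ) (Quotient.mk (lorSetoid ℓ) '' A) := by
  classical
  intro l hl Sq Sq' hSq hSq' Tn Tn' hTn hTn' f hf n
  have hV : ∀ Sq : Finset (Quotient (lorSetoid ℓ) × Quotient (lorSetoid ℓ)),
      Quotient.out '' netVerts Sq = netVerts (Sq.image (Prod.map Quotient.out Quotient.out)) :=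
    fun Sq => (netVerts_image_prodMap _).symm
  have hf' : ∀ m, RealizesCorresp (f m ∘ Quotient.mk (lorSetoid ℓ))
      (netVerts (Sq.image (Prod.map Quotient.out Quotient.out))) (netVerts (Tn m)) := by
    intro m
    rw [realizesCorresp_iff_image_eq, Set.image_comp, netVerts_image_out]
    exact realizesCorresp_iff_image_eq.mp (hf m)
  obtain ⟨n', hn', g, hgf, hg, hdis⟩ :=
    h l hl _ _ hSq.image_out hSq'.image_out Tn Tn' hTn hTn' _ hf' n
  refine ⟨n', hn', g ∘ Quotient.out, fun c hc => ?_, ?_, ?_⟩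
  · rw [Function.comp_apply, hgf c.out (hV Sq ▸ Set.mem_image_of_mem _ hc), Function.comp_apply,
      Quotient.out_eq]
  · rw [realizesCorresp_iff_image_eq, Set.image_comp, Set.image_union, hV, hV]
    exact realizesCorresp_iff_image_eq.mp hg
  · have hsep : ∀ c d, ℓ c.out d.out = lorQuotSep ℓ c d := fun c d => (lorQuotSep_eq_out c d).symm
    calc mapDistortion (lorQuotSep ℓ) (ℓn n') (g ∘ Quotient.out) (netVerts Sq ∪ netVerts Sq')
        = mapDistortion ℓ (ℓn n') g (Quotient.out '' (netVerts Sq ∪ netVerts Sq')) :=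
          mapDistortion_comp _ _ _ hsep
      _ ≤ mapDistortion ℓ (ℓn n') (f n' ∘ Quotient.mk _) (Quotient.out '' netVerts Sq) := by
          rwa [Set.image_union, hV, hV]
      _ = mapDistortion (lorQuotSep ℓ) (ℓn n') (f n') (netVerts Sq) := by
          rw [← mapDistortion_comp _ _ _ hsep]
          congr 1
          funext c
          simp only [Function.comp_apply, Quotient.out_eq]

end Quotient

open Classical in
def quotientNet {X : Type v} (ℓ : X → X → EReal) (S : Finset (X × X)) :
    Finset (Quotient (lorSetoid ℓ) × Quotient (lorSetoid ℓ)) :=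
  S.image (Prod.map (Quotient.mk (lorSetoid ℓ)) (Quotient.mk (lorSetoid ℓ)))

lemma netVerts_quotientNet {X : Type v} (ℓ : X → X → EReal) (S : Finset (X × X)) :
    netVerts (quotientNet ℓ S) = Quotient.mk (lorSetoid ℓ) '' netVerts S := by
  classical
  exact netVerts_image_prodMap _

def quotientRel {Y : Type u} {X : Type v} (ℓ : X → X → EReal) (R : Set (Y × X)) (V : Set Y) :
    Set (Y × Quotient (lorSetoid ℓ)) :=
  Prod.map id (Quotient.mk (lorSetoid ℓ)) '' {p | p ∈ R ∧ p.1 ∈ V}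

section QuotientPartner

variable {Y : Type u} {X : Type v} {tY : TopologicalSpace Y} {ℓY : Y → Y → EReal}
  {ℓ : X → X → EReal} {AY : Set Y} {SY : Finset (Y × Y)} {S : Finset (X × X)}
  {R : Set (Y × X)} {Φ : Y → X} {ε d : ℝ}

/-- A finite distortion cannot turn the value `ℓ (Φ a) (Φ b) ≥ 0` into `⊥`. -/
lemma causal_of_mk_partner_eq (hY : IsLPLS tY ℓY) (hX : ∀ x, 0 ≤ ℓ x x)
    (hΦ : ∀ a ∈ netVerts SY, (a, Φ a) ∈ R) (hdis : distortion ℓY ℓ R ≤ d)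
    {a b : Y} (ha : a ∈ netVerts SY) (hb : b ∈ netVerts SY)
    (h : Quotient.mk (lorSetoid ℓ) (Φ a) = Quotient.mk (lorSetoid ℓ) (Φ b)) :
    causal ℓY a b := by
  have hclose := (lorDiff_le_distortion (hΦ a ha) (hΦ b hb)).trans hdis
  refine hY.causal_of_ne_bot fun hbot => ?_
  have := (eq_bot_iff_of_lorDiff_le_coe hclose).mp hbot
  exact absurd (sep_nonneg_of_mk_eq hX h) (this ▸ by simp)

lemma diamondJ_subset_of_mk_partner_eq (hY : IsLPLS tY ℓY) (hX : ∀ x, 0 ≤ ℓ x x)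
    (hΦ : ∀ a ∈ netVerts SY, (a, Φ a) ∈ R) (hdis : distortion ℓY ℓ R ≤ d)
    {k k' : Y × Y} (hk : k ∈ SY) (hk' : k' ∈ SY)
    (h₁ : Quotient.mk (lorSetoid ℓ) (Φ k.1) = Quotient.mk (lorSetoid ℓ) (Φ k'.1))
    (h₂ : Quotient.mk (lorSetoid ℓ) (Φ k.2) = Quotient.mk (lorSetoid ℓ) (Φ k'.2)) :
    diamondJ ℓY k'.1 k'.2 ⊆ diamondJ ℓY k.1 k.2 :=
  hY.diamondJ_subset
    (causal_of_mk_partner_eq hY hX hΦ hdis (fst_mem_netVerts hk) (fst_mem_netVerts hk') h₁)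
    (causal_of_mk_partner_eq hY hX hΦ hdis (snd_mem_netVerts hk') (snd_mem_netVerts hk) h₂.symm)

lemma mk_partner_mem_shortVertexPairs (hε : 0 ≤ ε) (hSY : IsLorNet ℓY (ε / 2) AY SY)
    (hR : IsCorresp R (netVerts SY) (netVerts S)) (hΦ : ∀ a ∈ netVerts SY, (a, Φ a) ∈ R)
    (hdis : distortion ℓY ℓ R ≤ ((ε / 2 : ℝ) : EReal)) {k : Y × Y} (hk : k ∈ SY) :
    (Quotient.mk (lorSetoid ℓ) (Φ k.1), Quotient.mk (lorSetoid ℓ) (Φ k.2)) ∈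
      shortVertexPairs (lorQuotSep ℓ) ε (quotientNet ℓ S) := by
  have hΦ₁ := hΦ k.1 (fst_mem_netVerts hk)
  have hΦ₂ := hΦ k.2 (snd_mem_netVerts hk)
  rw [mem_shortVertexPairs, netVerts_quotientNet]
  refine ⟨Set.mem_image_of_mem _ (hR.1 _ hΦ₁).2, Set.mem_image_of_mem _ (hR.1 _ hΦ₂).2,
    max_le (EReal.coe_nonneg.mpr hε) ?_⟩
  calc ℓ (Φ k.1) (Φ k.2) ≤ ℓY k.1 k.2 + ((ε / 2 : ℝ) : EReal) := by
        have hclose := (lorDiff_le_distortion hΦ₁ hΦ₂).trans hdis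
        rw [lorDiff_comm] at hclose
        exact le_add_of_lorDiff_le_coe hclose
    _ ≤ ((ε / 2 : ℝ) : EReal) + ((ε / 2 : ℝ) : EReal) :=
        add_le_add_left ((le_max_right _ _).trans (hSY.1 k hk)) _
    _ = ε := by rw [← EReal.coe_add, add_halves]

lemma mk_diag_mem_shortVertexPairs (hX : ∀ x, ℓ x x = 0) (hε : 0 ≤ ε) {v : X}
    (hv : v ∈ netVerts S) :
    (Quotient.mk (lorSetoid ℓ) v, Quotient.mk (lorSetoid ℓ) v) ∈
      shortVertexPairs (lorQuotSep ℓ) ε (quotientNet ℓ S) := by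
  have hvq : Quotient.mk (lorSetoid ℓ) v ∈ netVerts (quotientNet ℓ S) := by
    rw [netVerts_quotientNet]; exact Set.mem_image_of_mem _ hv
  refine mem_shortVertexPairs.mpr ⟨hvq, hvq, ?_⟩
  simp only [lorTau, lorQuotSep_mk, hX, max_self, EReal.coe_nonneg, hε]

/-- One diamond of `SY` per pair of partner classes already covers (by
`diamondJ_subset_of_mk_partner_eq`); each vertex class reached by none of these diamonds gets a
degenerate diamond `(a, a)`. Both kinds are indexed by short pairs of vertex classes. -/
lemma exists_subfamily_card_le_shortVertexPairs [DecidableEq Y] (hY : IsLPLS tY ℓY)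
    (hX : ∀ x, ℓ x x = 0) (hε : 0 ≤ ε) (hSY : IsLorNet ℓY (ε / 2) AY SY)
    (hR : IsCorresp R (netVerts SY) (netVerts S))
    (hΦ : ∀ a ∈ netVerts SY, (a, Φ a) ∈ R) (hdis : distortion ℓY ℓ R ≤ ((ε / 2 : ℝ) : EReal)) :
    ∃ T ⊆ SY ∪ (netVertFinset SY).diag,
      (∀ k ∈ SY, ∃ t ∈ T, diamondJ ℓY k.1 k.2 ⊆ diamondJ ℓY t.1 t.2) ∧
      Quotient.mk (lorSetoid ℓ) '' netVerts S ⊆ Prod.snd '' quotientRel ℓ R (netVerts T) ∧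
      T.card ≤ (shortVertexPairs (lorQuotSep ℓ) ε (quotientNet ℓ S)).card := by
  classical
  set P := shortVertexPairs (lorQuotSep ℓ) ε (quotientNet ℓ S)
  set G : Y × Y → Quotient (lorSetoid ℓ) × Quotient (lorSetoid ℓ) :=
    fun k => (Quotient.mk _ (Φ k.1), Quotient.mk _ (Φ k.2))
  have hchoice : ∀ c ∈ P, ∃ t ∈ SY ∪ (netVertFinset SY).diag, (t ∈ SY ∧ G t = c) ∨
      ((∀ k ∈ SY, G k ≠ c) ∧ ∃ p ∈ R, p.1 = t.1 ∧ Quotient.mk _ p.2 = c.1) := by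
    intro c hc
    by_cases hG : ∃ k ∈ SY, G k = c
    · obtain ⟨k, hk, rfl⟩ := hG
      exact ⟨k, Finset.mem_union_left _ hk, Or.inl ⟨hk, rfl⟩⟩
    · push Not at hG
      have hc₁ := (mem_shortVertexPairs.mp hc).1
      rw [netVerts_quotientNet] at hc₁
      obtain ⟨v, hv, hvc⟩ := hc₁
      obtain ⟨a, ha, hav⟩ := hR.2.2 v hv
      refine ⟨(a, a), Finset.mem_union_right _ ?_, Or.inr ⟨hG, (a, v), hav, rfl, hvc⟩⟩
      exact Finset.mem_diag.mpr ⟨mem_netVertFinset.mpr ha, rfl⟩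
  choose r hrmem hr using hchoice
  have hrT : ∀ c (hc : c ∈ P), r c hc ∈ P.attach.image fun c => r c.1 c.2 :=
    fun c hc => Finset.mem_image_of_mem _ (Finset.mem_attach _ ⟨c, hc⟩)
  refine ⟨P.attach.image fun c => r c.1 c.2, ?_, fun k hk => ?_, ?_,
    Finset.card_image_le.trans Finset.card_attach.le⟩
  · intro t ht
    obtain ⟨c, -, rfl⟩ := Finset.mem_image.mp ht
    exact hrmem _ _
  · have hc := mk_partner_mem_shortVertexPairs hε hSY hR hΦ hdis hk
    refine ⟨r (G k) hc, hrT _ hc, ?_⟩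
    rcases hr (G k) hc with ⟨ht, hGt⟩ | ⟨hnot, -⟩
    · exact diamondJ_subset_of_mk_partner_eq hY (fun x => (hX x).ge) hΦ hdis ht hk
        (congrArg Prod.fst hGt) (congrArg Prod.snd hGt)
    · exact absurd rfl (hnot k hk)
  · rintro _ ⟨v, hv, rfl⟩
    have hc := mk_diag_mem_shortVertexPairs hX hε hv
    have hmem := fst_mem_netVerts (hrT _ hc)
    rcases hr _ hc with ⟨ht, hGt⟩ | ⟨-, p, hp, hp₁, hp₂⟩
    · exact ⟨_, ⟨(_, Φ _), ⟨hΦ _ (fst_mem_netVerts ht), hmem⟩, rfl⟩, congrArg Prod.fst hGt⟩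
    · exact ⟨_, ⟨p, ⟨hp, hp₁ ▸ hmem⟩, rfl⟩, hp₂⟩

lemma quotientRel_mono {V V' : Set Y} (h : V ⊆ V') : quotientRel ℓ R V ⊆ quotientRel ℓ R V' :=
  Set.image_mono fun _ hp => ⟨hp.1, h hp.2⟩

lemma distortion_quotientRel_le (V : Set Y) :
    distortion ℓY (lorQuotSep ℓ) (quotientRel ℓ R V) ≤ distortion ℓY ℓ R :=
  (distortion_image_prodMap id _ (fun _ _ => rfl) (fun _ _ => rfl)).le.trans
    (distortion_mono fun _ hp => hp.1)

lemma isCorresp_quotientRel {V : Set Y} (hR : IsCorresp R (netVerts SY) (netVerts S))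
    (hV : V ⊆ netVerts SY)
    (hreach : Quotient.mk (lorSetoid ℓ) '' netVerts S ⊆ Prod.snd '' quotientRel ℓ R V) :
    IsCorresp (quotientRel ℓ R V) V (Quotient.mk (lorSetoid ℓ) '' netVerts S) := by
  refine ⟨?_, fun a ha => ?_, fun c hc => ?_⟩
  · rintro _ ⟨p, ⟨hp, hpV⟩, rfl⟩
    exact ⟨hpV, Set.mem_image_of_mem _ (hR.1 p hp).2⟩
  · obtain ⟨v, hv, hav⟩ := hR.2.1 a (hV ha)
    exact ⟨_, Set.mem_image_of_mem _ hv, (a, v), ⟨hav, ha⟩, rfl⟩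
  · obtain ⟨_, ⟨p, ⟨hp, hpV⟩, rfl⟩, rfl⟩ := hreach hc
    exact ⟨p.1, hpV, p, ⟨hp, hpV⟩, rfl⟩

lemma netVerts_union_diag_subset [DecidableEq Y] :
    netVerts (SY ∪ (netVertFinset SY).diag) ⊆ netVerts SY := by
  rintro _ ⟨t, ht, rfl | rfl⟩ <;> rcases Finset.mem_union.mp ht with ht | ht
  · exact fst_mem_netVerts ht
  · exact mem_netVertFinset.mp (Finset.mem_diag.mp ht).1
  · exact snd_mem_netVerts ht
  · exact (Finset.mem_diag.mp ht).2 ▸ mem_netVertFinset.mp (Finset.mem_diag.mp ht).1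

lemma lorTau_le_of_mem_union_diag [DecidableEq Y] (hX : ∀ x, ℓ x x = 0) (hε : 0 ≤ ε)
    (hSY : IsLorNet ℓY (ε / 2) AY SY) (hΦ : ∀ a ∈ netVerts SY, (a, Φ a) ∈ R)
    (hdis : distortion ℓY ℓ R ≤ ((ε / 2 : ℝ) : EReal)) {t : Y × Y}
    (ht : t ∈ SY ∪ (netVertFinset SY).diag) : lorTau ℓY t.1 t.2 ≤ ε := by
  have hhalf : ((ε / 2 : ℝ) : EReal) ≤ ε := EReal.coe_le_coe_iff.mpr (by linarith)
  rcases Finset.mem_union.mp ht with ht | ht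
  · exact (hSY.1 t ht).trans hhalf
  · obtain ⟨ha, hdiag⟩ := Finset.mem_diag.mp ht
    have ha := mem_netVertFinset.mp ha
    rw [← hdiag]
    refine max_le (EReal.coe_nonneg.mpr hε) (le_trans ?_ hhalf)
    have := le_add_of_lorDiff_le_coe ((lorDiff_le_distortion (hΦ _ ha) (hΦ _ ha)).trans hdis)
    rwa [hX, zero_add] at this

lemma exists_quotient_partner_net [DecidableEq Y] (hY : IsLPLS tY ℓY) (hX : ∀ x, ℓ x x = 0)
    (hε : 0 ≤ ε) (hSY : IsLorNet ℓY (ε / 2) AY SY) (hcard : SY.card = S.card)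
    (hR : IsCorresp R (netVerts SY) (netVerts S)) (hΦ : ∀ a ∈ netVerts SY, (a, Φ a) ∈ R)
    (hdis : distortion ℓY ℓ R ≤ ((ε / 2 : ℝ) : EReal)) :
    ∃ B : Finset (Y × Y), IsLorNet ℓY ε AY B ∧
      B.card = min S.card (shortVertexPairs (lorQuotSep ℓ) ε (quotientNet ℓ S)).card ∧
      netVerts B ⊆ netVerts SY ∧
      Quotient.mk (lorSetoid ℓ) '' netVerts S ⊆ Prod.snd '' quotientRel ℓ R (netVerts B) := by
  rcases le_total S.card (shortVertexPairs (lorQuotSep ℓ) ε (quotientNet ℓ S)).card with h | h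
  · refine ⟨SY, hSY.mono_eps (by linarith), by rw [min_eq_left h, hcard], subset_rfl, ?_⟩
    rintro _ ⟨v, hv, rfl⟩
    obtain ⟨a, ha, hav⟩ := hR.2.2 v hv
    exact ⟨_, ⟨(a, v), ⟨hav, ha⟩, rfl⟩, rfl⟩
  obtain ⟨T, hTsub, hTcov, hTreach, hTcard⟩ :=
    exists_subfamily_card_le_shortVertexPairs hY hX hε hSY hR hΦ hdis
  obtain ⟨B, hTB, hBsub, hBcard⟩ := Finset.exists_subsuperset_card_eq Finset.subset_union_left
    hTcard (h.trans (hcard ▸ Finset.card_le_card (Finset.subset_union_right (s₁ := T))))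
  have hBsub' : B ⊆ SY ∪ (netVertFinset SY).diag :=
    hBsub.trans (Finset.union_subset hTsub Finset.subset_union_left)
  refine ⟨B, ⟨fun t ht => lorTau_le_of_mem_union_diag hX hε hSY hΦ hdis (hBsub' ht), ?_⟩,
    by rw [hBcard, min_eq_right h], (netVerts_mono hBsub').trans netVerts_union_diag_subset,
    hTreach.trans (Set.image_mono (quotientRel_mono (netVerts_mono hTB)))⟩
  intro x hx
  obtain ⟨k, hk, hxk⟩ := Set.mem_iUnion₂.mp (hSY.2 hx)
  obtain ⟨t, ht, hkt⟩ := hTcov k hk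
  exact Set.mem_iUnion₂.mpr ⟨t, hTB ht, hkt hxk⟩

end QuotientPartner

lemma LGHNets.quotient {Xn : ℕ → Type u} {tXn : ∀ n, TopologicalSpace (Xn n)}
    {ℓn : ∀ n, Xn n → Xn n → EReal} {An : ∀ n, Set (Xn n)} {X : Type v} {ℓ : X → X → EReal}
    {A : Set X} (h : LGHNets ℓn An ℓ A) (hXn : ∀ n, IsLPLS (tXn n) (ℓn n))
    (hX : ∀ x, ℓ x x = 0) (hA : A.Nonempty) :
    LGHNets ℓn An (lorQuotSep ℓ) (Quotient.mk (lorSetoid ℓ) '' A) := by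
  classical
  intro ε hε
  obtain ⟨n₀, S, Sn, R, hS, hSn, hR⟩ := h (ε / 2) (half_pos hε)
  obtain ⟨n₁, hn₁⟩ :=
    eventually_atTop.mp (hR.eventually_le_const (EReal.coe_pos.mpr (half_pos hε)))
  have hSq : IsLorNet (lorQuotSep ℓ) ε (Quotient.mk (lorSetoid ℓ) '' A) (quotientNet ℓ S) :=
    hS.image_mk.mono_eps (by linarith)
  obtain ⟨Q, hQ, hQcard, hQV⟩ :=
    hSq.exists_card_eq (N := min S.card (shortVertexPairs (lorQuotSep ℓ) ε (quotientNet ℓ S)).card)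
      (le_min Finset.card_image_le (Finset.card_le_card hSq.subset_shortVertexPairs))
      (min_le_right _ _)
  rw [netVerts_quotientNet] at hQV
  obtain ⟨a, ha⟩ := hA
  have : Nonempty X := ⟨a⟩
  obtain ⟨pq, hpq, -⟩ := Set.mem_iUnion₂.mp (hS.2 ha)
  have hpartner : ∀ n, ∃ (B : Finset (Xn n × Xn n)) (R' : Set (Xn n × Quotient (lorSetoid ℓ))),
      max n₀ n₁ ≤ n → IsLorNet (ℓn n) ε (An n) B ∧ B.card = Q.card ∧
        IsCorresp R' (netVerts B) (netVerts Q) ∧ 0 ≤ distortion (ℓn n) (lorQuotSep ℓ) R' ∧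
        distortion (ℓn n) (lorQuotSep ℓ) R' ≤ distortion (ℓn n) ℓ (R n) := by
    intro n
    by_cases hn : max n₀ n₁ ≤ n
    swap
    · exact ⟨∅, ∅, fun h => absurd h hn⟩
    obtain ⟨hSn', hcard, hRn⟩ := hSn n (le_of_max_le_left hn)
    choose! Φ hΦ using hRn.2.1
    obtain ⟨B, hB, hBcard, hBV, hreach⟩ := exists_quotient_partner_net (hXn n) hX hε.le hSn'
      hcard hRn (fun a ha => (hΦ a ha).2) (hn₁ n (le_of_max_le_right hn))
    obtain ⟨_, hp, -⟩ := hreach (Set.mem_image_of_mem _ (fst_mem_netVerts hpq))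
    exact ⟨B, quotientRel ℓ (R n) (netVerts B), fun _ => ⟨hB, hBcard.trans hQcard.symm,
      hQV ▸ isCorresp_quotientRel hRn hBV hreach, distortion_nonneg ⟨_, hp⟩,
      distortion_quotientRel_le _⟩⟩
  choose B R' hBR using hpartner
  refine ⟨max n₀ n₁, Q, B, R', hQ, fun n hn => ⟨(hBR n hn).1, (hBR n hn).2.1, (hBR n hn).2.2.1⟩,
    tendsto_of_tendsto_of_tendsto_of_le_of_le' tendsto_const_nhds hR ?_ ?_⟩ <;>
    filter_upwards [eventually_ge_atTop (max n₀ n₁)] with n hn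
  exacts [(hBR n hn).2.2.2.1, (hBR n hn).2.2.2.2]

lemma LGHConv.quotient {Xn : ℕ → Type u} {tXn : ∀ n, TopologicalSpace (Xn n)}
    {ℓn : ∀ n, Xn n → Xn n → EReal} {An : ∀ n, Set (Xn n)} {X : Type v}
    {tX : TopologicalSpace X} {ℓ : X → X → EReal} {A : Set X} (h : LGHConv Xn ℓn An X tX ℓ A)
    (hXn : ∀ n, IsLPLS (tXn n) (ℓn n)) (hX : ∀ x, ℓ x x = 0) (hA : A.Nonempty) :
    LGHConv Xn ℓn An (Quotient (lorSetoid ℓ)) (lorQuotTop tX ℓ) (lorQuotSep ℓ)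
      (Quotient.mk (lorSetoid ℓ) '' A) :=
  ⟨h.1.quotient hXn hX hA, h.2.1.quotient, h.2.2.quotient fun e => 0 ≤ e⟩

lemma LGHConvStrong.quotient {Xn : ℕ → Type u} {tXn : ∀ n, TopologicalSpace (Xn n)}
    {ℓn : ∀ n, Xn n → Xn n → EReal} {An : ∀ n, Set (Xn n)} {X : Type v}
    {tX : TopologicalSpace X} {ℓ : X → X → EReal} {A : Set X}
    (h : LGHConvStrong Xn ℓn An X tX ℓ A) (hXn : ∀ n, IsLPLS (tXn n) (ℓn n))
    (hX : ∀ x, ℓ x x = 0) (hA : A.Nonempty) :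
    LGHConvStrong Xn ℓn An (Quotient (lorSetoid ℓ)) (lorQuotTop tX ℓ) (lorQuotSep ℓ)
      (Quotient.mk (lorSetoid ℓ) '' A) :=
  ⟨h.1.quotient hXn hX hA, h.2.1.quotient, h.2.2.quotient fun e => 0 < e⟩


/-- **Time separation quotient preserves limits** (Theorem 5.3).
If `(Xn, ℓn, on', Un)` converges (resp. converges strongly) in the pointed Lorentzian
Gromov–Hausdorff sense to `(X, ℓ, o, U)`, then it also converges (resp. converges
strongly) to the time separation quotient
`(X/∼, ℓ^∼, π(o), (π(U k))ₖ)`. -/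
theorem quotient_preserves_limits
    (Xn : ℕ → Type u) (tXn : ∀ n, TopologicalSpace (Xn n))
    (ℓn : ∀ n, Xn n → Xn n → EReal) (on' : ∀ n, Xn n) (Un : ∀ n, ℕ → Set (Xn n))
    {X : Type v} (tX : TopologicalSpace X) (ℓ : X → X → EReal) (o : X) (U : ℕ → Set X)
    (hn : ∀ n, IsCoveredLPLS (tXn n) (ℓn n) (on' n) (Un n))
    (hX : IsCoveredLPLS tX ℓ o U) :
    (pLGHConv Xn tXn ℓn on' Un X tX ℓ o U →
      pLGHConv Xn tXn ℓn on' Un (Quotient (lorSetoid ℓ)) (lorQuotTop tX ℓ)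
        (lorQuotSep ℓ) (Quotient.mk (lorSetoid ℓ) o)
        (fun k => Quotient.mk (lorSetoid ℓ) '' U k)) ∧
    (pLGHConvStrong Xn tXn ℓn on' Un X tX ℓ o U →
      pLGHConvStrong Xn tXn ℓn on' Un (Quotient (lorSetoid ℓ)) (lorQuotTop tX ℓ)
        (lorQuotSep ℓ) (Quotient.mk (lorSetoid ℓ) o)
        (fun k => Quotient.mk (lorSetoid ℓ) '' U k)) :=
  ⟨fun h k => (h k).quotient (fun n => (hn n).lpls) hX.sep_self_eq_zero ⟨o, hX.base_mem k⟩,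
    fun h k => (h k).quotient (fun n => (hn n).lpls) hX.sep_self_eq_zero ⟨o, hX.base_mem k⟩⟩

end
end

section
/- Global hyperbolicity implies forward completeness. Let (X, ℓ) be a globally hyperbolic Lorentzian pre-length space, i.e. (X,ℓ) is causal, the causal relation ≤ is closed in X × X, and every causal diamond J(p,q) is compact. Then (X, ℓ) is forward complete: every sequence (x_k) in X with x_k ≤ x_{k+1} ≤ x̂ for all k and some x̂ ∈ X converges in X. -/
open Filter Topology Set

set_option linter.unusedVariables false

universe u v w

noncomputable section

/-!
A causally monotone sequence bounded by `x̂` stays in the compact diamond `J(x₀, x̂)`, so it has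
cluster points. Since the causal relation is closed, every cluster point lies in the closed
future of each `x_k`, and then every term lies in the closed past of each cluster point; hence
any two cluster points are causally related both ways. Causality makes the cluster point unique,
and a sequence in a compact set with a unique cluster point converges to it.
-/

section ClosedRelation

variable {X : Type*} [TopologicalSpace X] {r : X → X → Prop}

theorem isClosed_setOf_rel_left (hr : IsClosed {p : X × X | r p.1 p.2}) (a : X) :
    IsClosed {z | r a z} :=
  hr.preimage (Continuous.prodMk_right a)

theorem isClosed_setOf_rel_right (hr : IsClosed {p : X × X | r p.1 p.2}) (a : X) :
    IsClosed {z | r z a} :=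
  hr.preimage (Continuous.prodMk_left a)

theorem rel_of_mapClusterPt_of_rel_mono (hr : IsClosed {p : X × X | r p.1 p.2}) {x : ℕ → X}
    (hx : ∀ m n, m ≤ n → r (x m) (x n)) {y : X} (hy : MapClusterPt y atTop x) (k : ℕ) :
    r (x k) y :=
  (isClosed_setOf_rel_left hr (x k)).mem_of_mapClusterPt hy
    (eventually_ge_atTop k |>.mono fun n hn => hx k n hn)

theorem rel_of_mapClusterPt_of_mapClusterPt (hr : IsClosed {p : X × X | r p.1 p.2})
    {x : ℕ → X} (hx : ∀ m n, m ≤ n → r (x m) (x n)) {y y' : X}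
    (hy : MapClusterPt y atTop x) (hy' : MapClusterPt y' atTop x) : r y y' :=
  (isClosed_setOf_rel_right hr y').mem_of_mapClusterPt hy
    (Eventually.of_forall (rel_of_mapClusterPt_of_rel_mono hr hx hy'))

theorem exists_tendsto_of_rel_mono_of_isCompact (hr : IsClosed {p : X × X | r p.1 p.2})
    (hanti : ∀ a b, r a b → r b a → a = b) {x : ℕ → X} (hx : ∀ m n, m ≤ n → r (x m) (x n))
    {K : Set X} (hK : IsCompact K) (hxK : ∀ n, x n ∈ K) : ∃ y, Tendsto x atTop (𝓝 y) := by
  have hxK' : ∀ᶠ n in atTop, x n ∈ K := Eventually.of_forall hxK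
  obtain ⟨y, -, hy⟩ := hK.exists_mapClusterPt (tendsto_principal.2 hxK')
  refine ⟨y, hK.tendsto_nhds_of_unique_mapClusterPt hxK' ?_⟩
  intro z _ hz
  exact hanti z y (rel_of_mapClusterPt_of_mapClusterPt hr hx hz hy)
    (rel_of_mapClusterPt_of_mapClusterPt hr hx hy hz)

end ClosedRelation

namespace IsLPLS

variable {X : Type u} {tX : TopologicalSpace X} {ℓ : X → X → EReal}

theorem causal_trans_s10 (h : IsLPLS tX ℓ) {a b c : X} (hab : causal ℓ a b) (hbc : causal ℓ b c) :
    causal ℓ a c :=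
  calc (0 : EReal) = 0 + 0 := (zero_add 0).symm
    _ ≤ ℓ a b + ℓ b c := add_le_add hab hbc
    _ ≤ ℓ a c := h.revTriangle a b c

theorem causal_of_causal_succ (h : IsLPLS tX ℓ) {x : ℕ → X}
    (hx : ∀ k, causal ℓ (x k) (x (k + 1))) {m n : ℕ} (hmn : m ≤ n) : causal ℓ (x m) (x n) :=
  haveI : Std.Refl (causal ℓ) := ⟨h.refl_nonneg⟩
  haveI : IsTrans X (causal ℓ) := ⟨fun _ _ _ => h.causal_trans_s10⟩
  Nat.rel_of_forall_rel_succ_of_le (causal ℓ) hx hmn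

end IsLPLS

/-- **Global hyperbolicity implies forward completeness** (Remark 4.7).
Let `(X, ℓ)` be a globally hyperbolic Lorentzian pre-length space: causal, with closed
causal relation and compact causal diamonds.  Then every monotone increasing and bounded
sequence converges, i.e. `(X, ℓ)` is forward complete. -/
theorem globally_hyperbolic_forward_complete {X : Type u} (tX : TopologicalSpace X)
    (ℓ : X → X → EReal) (h : IsLPLS tX ℓ)
    -- causal
    (hcausal : ∀ x y : X, causal ℓ x y → causal ℓ y x → x = y)
    -- the causal relation is closed
    (hclosed : @IsClosed (X × X) (@instTopologicalSpaceProd X X tX tX)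
      {p : X × X | causal ℓ p.1 p.2})
    -- causal diamonds are compact
    (hcompact : ∀ p q : X, @IsCompact X tX (diamondJ ℓ p q)) :
    ForwardComplete tX ℓ := by
  intro x xhat hsucc hbdd
  have hmono : ∀ m n, m ≤ n → causal ℓ (x m) (x n) := fun _ _ => h.causal_of_causal_succ hsucc
  exact exists_tendsto_of_rel_mono_of_isCompact hclosed hcausal hmono (hcompact (x 0) xhat)
    fun n => ⟨hmono 0 n n.zero_le, hbdd n⟩

end
end

section
/- Bounding the cardinality of Lorentzian ε-nets in a product. Let (Σ, d) be a metric space, let 0 < t₋ < t₊, and let A ⊆ [t₋, t₊] × Σ in the Lorentzian product ℝ ×_ℓ Σ. Let 0 < ε ≤ t₋ and let s₁, …, s_N be a metric ε/3-net in Σ. Set L := ⌈3(t₊ − t₋)/ε⌉, t_i := t₋ + i·(ε/3) for i = −1, …, L+1, and x_{i,j} := (t_i, s_j). Then the collection 𝒥 := { J(x_{i−1,j}, x_{i+2,j}) : i = 0, …, L−1; j = 1, …, N } is a Lorentzian ε-net for A of cardinality at most L·N: each diamond satisfies τ(x_{i−1,j}, x_{i+2,j}) = ε and A ⊆ ⋃_{J∈𝒥}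 J. -/
/-!
A point `(t, x)` of `A` lies in some time cell `[t_i, t_{i+1}]` of the grid, and `x` lies within
`ε/3` of some `s_j`. The diamond `J((t_{i-1}, s_j), (t_{i+2}, s_j))` over the fixed point `s_j` has
time separation `t_{i+2} - t_{i-1} = ε`, and it contains every point within spatial distance `ε/3`
of `s_j` whose time is at least `ε/3` away from both endpoints, in particular `(t, x)`.
-/

open Set

noncomputable section

universe u

/-- The causal relation of the Lorentzian product `ℝ ×ₗ Σ` of the real line with a metric
space `(Σ, d)`: `(s,x) ≤ (t,y)` iff `d(x,y) ≤ t − s`. -/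
def prodCausal {Sg : Type u} [MetricSpace Sg] (p q : ℝ × Sg) : Prop :=
  dist p.2 q.2 ≤ q.1 - p.1

/-- The causal diamond `J(p,q)` in the Lorentzian product. -/
def prodJ {Sg : Type u} [MetricSpace Sg] (p q : ℝ × Sg) : Set (ℝ × Sg) :=
  {z | prodCausal p z ∧ prodCausal z q}

/-- The time separation function of the Lorentzian product:
`τ((s,x),(t,y)) = √((t−s)² − d(x,y)²)` for causally related points, `0` otherwise. -/
def prodTau {Sg : Type u} [MetricSpace Sg] (p q : ℝ × Sg) : ℝ :=
  open scoped Classical in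
  if prodCausal p q then Real.sqrt ((q.1 - p.1) ^ 2 - dist p.2 q.2 ^ 2) else 0

section LorentzianProduct

variable {Sg : Type u} [MetricSpace Sg]

theorem prodTau_of_snd_eq {s t : ℝ} (hst : s ≤ t) (x : Sg) :
    prodTau ((s, x) : ℝ × Sg) (t, x) = t - s := by
  have hcausal : prodCausal ((s, x) : ℝ × Sg) (t, x) := by
    simpa [prodCausal] using hst
  rw [prodTau, if_pos hcausal, dist_self]
  simpa using Real.sqrt_sq (sub_nonneg.2 hst)

theorem mem_prodJ_of_dist_le {a b δ : ℝ} {x : Sg} {z : ℝ × Sg} (hz : dist z.2 x ≤ δ)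
    (ha : a + δ ≤ z.1) (hb : z.1 + δ ≤ b) :
    z ∈ prodJ ((a, x) : ℝ × Sg) (b, x) := by
  constructor
  · show dist x z.2 ≤ z.1 - a
    rw [dist_comm]
    linarith
  · show dist z.2 x ≤ b - z.1
    linarith

end LorentzianProduct

theorem exists_nat_lt_le_le_add_one {x : ℝ} {L : ℕ} (hL : 0 < L) (hx₀ : 0 ≤ x)
    (hxL : x ≤ L) : ∃ i < L, (i : ℝ) ≤ x ∧ x ≤ i + 1 := by
  rcases lt_or_eq_of_le hxL with hlt | rfl
  · refine ⟨⌊x⌋₊, ?_, Nat.floor_le hx₀, (Nat.lt_floor_add_one x).le⟩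
    exact_mod_cast (Nat.floor_le hx₀).trans_lt hlt
  · refine ⟨L - 1, Nat.sub_lt hL one_pos, ?_, ?_⟩ <;> rw [Nat.cast_pred hL] <;> linarith

theorem exists_grid_cell {t₀ t h : ℝ} {L : ℕ} (hh : 0 < h) (hL : 0 < L) (ht₀ : t₀ ≤ t)
    (htL : t ≤ t₀ + L * h) : ∃ i < L, t₀ + i * h ≤ t ∧ t ≤ t₀ + (i + 1) * h := by
  obtain ⟨i, hi, hlo, hhi⟩ := exists_nat_lt_le_le_add_one (x := (t - t₀) / h) hL
    (div_nonneg (sub_nonneg.2 ht₀) hh.le) ((div_le_iff₀ hh).2 (by linarith))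
  refine ⟨i, hi, ?_, ?_⟩
  · linarith [(le_div_iff₀ hh).1 hlo]
  · linarith [(div_le_iff₀ hh).1 hhi]

theorem product_eps_net_cardinality_general {Sg : Type u} [MetricSpace Sg]
    (tm tp : ℝ) (htmp : tm < tp)
    (A : Set (ℝ × Sg)) (hA : ∀ p ∈ A, tm ≤ p.1 ∧ p.1 ≤ tp)
    (ε : ℝ) (hε : 0 < ε)
    (N : ℕ) (s : Fin N → Sg) (hS : ∀ x : Sg, ∃ j, dist x (s j) < ε / 3) :
    (∀ (i : Fin ⌈3 * (tp - tm) / ε⌉₊) (j : Fin N),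
      prodTau ((tm + ((i : ℤ) - 1) * (ε / 3), s j) : ℝ × Sg)
        ((tm + ((i : ℤ) + 2) * (ε / 3), s j) : ℝ × Sg) = ε) ∧
    A ⊆ ⋃ (i : Fin ⌈3 * (tp - tm) / ε⌉₊) (j : Fin N),
      prodJ ((tm + ((i : ℤ) - 1) * (ε / 3), s j) : ℝ × Sg)
        ((tm + ((i : ℤ) + 2) * (ε / 3), s j) : ℝ × Sg) := by
  set L := ⌈3 * (tp - tm) / ε⌉₊
  have hL : 0 < L := Nat.ceil_pos.2 (div_pos (by linarith) hε)
  have htpL : tp ≤ tm + L * (ε / 3) := by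
    have := (div_le_iff₀ hε).1 (Nat.le_ceil (3 * (tp - tm) / ε))
    linarith
  refine ⟨fun i j => ?_, fun p hp => ?_⟩
  · rw [prodTau_of_snd_eq (by linarith)]
    ring
  · obtain ⟨htm_le, hle_tp⟩ := hA p hp
    obtain ⟨j, hj⟩ := hS p.2
    obtain ⟨i, hi, hlo, hhi⟩ := exists_grid_cell (by positivity) hL htm_le (hle_tp.trans htpL)
    refine mem_iUnion₂_of_mem (i := ⟨i, hi⟩) (j := j) (mem_prodJ_of_dist_le hj.le ?_ ?_)
    · push_cast; linarith
    · push_cast; linarith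

/-- **Bounding the cardinality of Lorentzian ε-nets in a product** (Lemma 8.2).
Let `(Σ, d)` be a metric space, `0 < t₋ < t₊`, and `A ⊆ [t₋,t₊] × Σ` in the Lorentzian
product `ℝ ×ₗ Σ`.  Let `0 < ε ≤ t₋` and let `s₁, …, s_N` be a metric `ε/3`-net in `Σ`.
With `L := ⌈3(t₊ − t₋)/ε⌉` and `t_i := t₋ + i·ε/3`, the collection of causal diamonds
`J((t_{i−1}, s_j), (t_{i+2}, s_j))`, `i = 0,…,L−1`, `j = 1,…,N` — of cardinality at most
`L · N` — is a Lorentzian `ε`-net for `A`: each diamond has timelike diameter exactly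
`ε`, and the diamonds cover `A`. -/
theorem product_eps_net_cardinality {Sg : Type u} [MetricSpace Sg]
    (tm tp : ℝ) (htm : 0 < tm) (htmp : tm < tp)
    (A : Set (ℝ × Sg)) (hA : ∀ p ∈ A, tm ≤ p.1 ∧ p.1 ≤ tp)
    (ε : ℝ) (hε : 0 < ε) (hεt : ε ≤ tm)
    (N : ℕ) (s : Fin N → Sg) (hS : ∀ x : Sg, ∃ j, dist x (s j) < ε / 3) :
    (∀ (i : Fin ⌈3 * (tp - tm) / ε⌉₊) (j : Fin N),
      prodTau ((tm + ((i : ℤ) - 1) * (ε / 3), s j) : ℝ × Sg)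
        ((tm + ((i : ℤ) + 2) * (ε / 3), s j) : ℝ × Sg) = ε) ∧
    A ⊆ ⋃ (i : Fin ⌈3 * (tp - tm) / ε⌉₊) (j : Fin N),
      prodJ ((tm + ((i : ℤ) - 1) * (ε / 3), s j) : ℝ × Sg)
        ((tm + ((i : ℤ) + 2) * (ε / 3), s j) : ℝ × Sg) :=
  product_eps_net_cardinality_general tm tp htmp A hA ε hε N s hS

end
end

section
/- Characterization of global hyperbolicity. Let (X, ℓ) be a Lorentzian pre-length space without chronologically isolated points (I⁺(x) ≠ ∅ and I⁻(x) ≠ ∅ for every x ∈ X) and with closed causal relation ≤ (the set {(x,y) : ℓ(x,y) ≥ 0} is closed in X × X). Then the following are equivalent: (i) the causal diamonds J(p,q) are compact for all p, q ∈ X; (ii) the chronological diamonds I(p,q) are relatively compact for all p ≪ q. -/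
open Filter Topology Set

set_option linter.unusedVariables false

universe u v w

noncomputable section

/-! Closedness of `≤` makes each `J(p,q)` closed, and `J(p,q) ⊇ I(p,q)`; this gives (i) ⇒ (ii).
Conversely, choose `p' ≪ p` and `q ≪ q'`. The push-up property `x ≪ y ≤ z ⇒ x ≪ z` (and its dual)
gives `J(p,q) ⊆ I(p',q')`, and if `J(p,q)` has a point `z` then `p' ≪ z ≪ q'`, so `p' ≪ q'`:
thus `J(p,q)` is a closed subset of the compact set `closure I(p',q')`. -/

section

variable {X : Type u} {ℓ : X → X → EReal} {p q p' q' x y z : X}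

theorem causal_of_chron (hxy : chron ℓ x y) : causal ℓ x y := le_of_lt hxy

theorem chron.trans_causal (hℓ : ∀ x y z, ℓ x y + ℓ y z ≤ ℓ x z)
    (hxy : chron ℓ x y) (hyz : causal ℓ y z) : chron ℓ x z :=
  hxy.trans_le ((le_add_of_nonneg_right hyz).trans (hℓ x y z))

theorem causal.trans_chron (hℓ : ∀ x y z, ℓ x y + ℓ y z ≤ ℓ x z)
    (hxy : causal ℓ x y) (hyz : chron ℓ y z) : chron ℓ x z :=
  hyz.trans_le ((le_add_of_nonneg_left hxy).trans (hℓ x y z))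

theorem diamondI_subset_diamondJ : diamondI ℓ p q ⊆ diamondJ ℓ p q :=
  fun _ hz => ⟨causal_of_chron hz.1, causal_of_chron hz.2⟩

theorem diamondJ_subset_diamondI (hℓ : ∀ x y z, ℓ x y + ℓ y z ≤ ℓ x z)
    (hp : chron ℓ p' p) (hq : chron ℓ q q') : diamondJ ℓ p q ⊆ diamondI ℓ p' q' :=
  fun _ hz => ⟨hp.trans_causal hℓ hz.1, hz.2.trans_chron hℓ hq⟩

theorem chron_of_mem_diamondI (hℓ : ∀ x y z, ℓ x y + ℓ y z ≤ ℓ x z)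
    (hz : z ∈ diamondI ℓ p q) : chron ℓ p q :=
  hz.1.trans_causal hℓ (causal_of_chron hz.2)

variable [TopologicalSpace X]

theorem isClosed_diamondJ (hclosed : IsClosed {p : X × X | causal ℓ p.1 p.2}) (p q : X) :
    IsClosed (diamondJ ℓ p q) :=
  (hclosed.preimage (Continuous.prodMk_right p)).inter
    (hclosed.preimage (continuous_id.prodMk continuous_const))

theorem IsCompact.closure_diamondI (hclosed : IsClosed {p : X × X | causal ℓ p.1 p.2})
    (hJ : IsCompact (diamondJ ℓ p q)) : IsCompact (closure (diamondI ℓ p q)) :=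
  hJ.of_isClosed_subset isClosed_closure
    (closure_minimal diamondI_subset_diamondJ (isClosed_diamondJ hclosed p q))

theorem isCompact_diamondJ_of_isCompact_closure_diamondI
    (hℓ : ∀ x y z, ℓ x y + ℓ y z ≤ ℓ x z) (hclosed : IsClosed {p : X × X | causal ℓ p.1 p.2})
    (hI : IsCompact (closure (diamondI ℓ p' q'))) (hp : chron ℓ p' p) (hq : chron ℓ q q') :
    IsCompact (diamondJ ℓ p q) :=
  hI.of_isClosed_subset (isClosed_diamondJ hclosed p q)
    ((diamondJ_subset_diamondI hℓ hp hq).trans subset_closure)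

end

/-- **Characterization of global hyperbolicity** (Lemma A.11).
Let `(X, ℓ)` be a Lorentzian pre-length space without chronologically isolated points
(`I⁺(x) ≠ ∅ ≠ I⁻(x)` for all `x`) and with closed causal relation.  Then the causal
diamonds `J(p,q)` are compact for all `p, q` if and only if the chronological diamonds
`I(p,q)` are relatively compact for all `p ≪ q`. -/
theorem global_hyperbolicity_characterization {X : Type u} (tX : TopologicalSpace X)
    (ℓ : X → X → EReal) (h : IsLPLS tX ℓ)
    (hIplus : ∀ x : X, ∃ y, chron ℓ x y)
    (hIminus : ∀ x : X, ∃ y, chron ℓ y x)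
    (hclosed : @IsClosed (X × X) (@instTopologicalSpaceProd X X tX tX)
      {p : X × X | causal ℓ p.1 p.2}) :
    (∀ p q : X, @IsCompact X tX (diamondJ ℓ p q)) ↔
    (∀ p q : X, chron ℓ p q → @IsCompact X tX (@closure X tX (diamondI ℓ p q))) := by
  refine ⟨fun hJ p q _ => (hJ p q).closure_diamondI hclosed, fun hI p q => ?_⟩
  rcases (diamondJ ℓ p q).eq_empty_or_nonempty with hempty | ⟨z, hz⟩
  · exact hempty ▸ isCompact_empty
  obtain ⟨p', hp⟩ := hIminus p
  obtain ⟨q', hq⟩ := hIplus q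
  have hp'q' : chron ℓ p' q' :=
    chron_of_mem_diamondI h.revTriangle (diamondJ_subset_diamondI h.revTriangle hp hq hz)
  exact isCompact_diamondJ_of_isCompact_closure_diamondI h.revTriangle hclosed
    (hI p' q' hp'q') hp hq

end
end
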